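/- arXiv:1307.6842 — 14 statements merged into one kernel-verified Lean document; each statement's English description precedes it below -/
import Mathlib

section
/- Let p be a nonzero real polynomial whose nonzero coefficients, listed in order of increasing exponent, are a₀, a₁, …, aₙ, and let k be the number of indices i with aᵢ·aᵢ₊₁ < 0 (the number of sign variations). Let P be the number of positive real roots of p counted with multiplicity. Then P ≤ k and k − P is even. -/
/-!
The bound `P ≤ k` is Mathlib's `Polynomial.roots_countP_pos_le_signVariations`, once the sign
variations of `p` are identified with `k` by peeling off leading terms. For the parity, both `k`
and `P` are even exactly when the lowest and highest coefficients of `p` have the same sign: along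
the coefficient sequence every variation flips the sign; on the root side, splitting off a factor
`X - r` multiplies the trailing coefficient by `-r` and keeps the leading one, and a real
polynomial without roots has constant sign, so its value at `0` has the sign of its leading
coefficient.
-/

open Polynomial Finset

theorem Fin.card_filter_univ_castSucc {n : ℕ} (p : Fin (n + 1) → Prop) [DecidablePred p] :
    #{i | p i} = #{i : Fin n | p i.castSucc} + if p (Fin.last n) then 1 else 0 := by
  simp only [card_filter, Fin.sum_univ_castSucc]

section OrderedRing

variable {R : Type*} [Ring R] [LinearOrder R] [IsStrictOrderedRing R] {x y : R}

theorem sign_eq_neg_sign_iff_mul_neg (hy : y ≠ 0) :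
    SignType.sign x = -SignType.sign y ↔ x * y < 0 := by
  rw [← sign_eq_neg_one_iff, sign_mul]
  rcases hy.lt_or_gt with hy | hy <;> simp [hy, sign_neg, sign_pos]

theorem mul_pos_iff_of_ne_zero (hx : x ≠ 0) (hy : y ≠ 0) : 0 < x * y ↔ (0 < x ↔ 0 < y) := by
  rcases hx.lt_or_gt with hx | hx <;> rcases hy.lt_or_gt with hy | hy <;>
    simp [mul_pos_iff, hx, hy, hx.not_gt, hy.not_gt]

theorem even_card_filter_mul_neg_iff :
    ∀ {n : ℕ} {a : Fin (n + 1) → R}, (∀ i, a i ≠ 0) →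
      (Even #{i : Fin n | a i.castSucc * a i.succ < 0} ↔ 0 < a 0 * a (Fin.last n))
  | 0, a, ha => by simpa using mul_self_pos.2 (ha 0)
  | n + 1, a, ha => by
    have ih := even_card_filter_mul_neg_iff (a := fun i => a i.castSucc) fun i => ha _
    have hlast : Even (if a (Fin.last n).castSucc * a (Fin.last (n + 1)) < 0 then 1 else 0) ↔
        0 < a (Fin.last n).castSucc * a (Fin.last (n + 1)) := by
      split_ifs with h
      · simpa using h.le
      · simpa using (not_lt.1 h).lt_of_ne' (mul_ne_zero (ha _) (ha _))
    rw [Fin.card_filter_univ_castSucc, Nat.even_add]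
    simp only [Fin.succ_castSucc, Fin.succ_last, Fin.castSucc_zero] at ih ⊢
    rw [ih, hlast, mul_pos_iff_of_ne_zero (ha _) (ha _), mul_pos_iff_of_ne_zero (ha _) (ha _),
      mul_pos_iff_of_ne_zero (ha _) (ha _)]
    tauto

end OrderedRing

namespace Polynomial

section Semiring

variable {R : Type*} [Semiring R] {n : ℕ} {e : Fin (n + 1) → ℕ} {a : Fin (n + 1) → R}

theorem coeff_sum_C_mul_X_pow_of_injective (he : Function.Injective e) (i : Fin (n + 1)) :
    (∑ j, C (a j) * X ^ e j).coeff (e i) = a i := by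
  simp [he.eq_iff]

theorem coeff_sum_C_mul_X_pow_eq_zero {m : ℕ} (hm : ∀ i, e i ≠ m) :
    (∑ j, C (a j) * X ^ e j).coeff m = 0 := by
  simp [Ne.symm (hm _)]

theorem natDegree_sum_C_mul_X_pow_le (he : Monotone e) :
    (∑ j, C (a j) * X ^ e j).natDegree ≤ e (Fin.last n) :=
  natDegree_sum_le_of_forall_le _ _ fun i _ =>
    (natDegree_C_mul_X_pow_le _ _).trans (he (Fin.le_last i))

theorem leadingCoeff_sum_C_mul_X_pow (he : StrictMono e) (ha : a (Fin.last n) ≠ 0) :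
    (∑ j, C (a j) * X ^ e j).leadingCoeff = a (Fin.last n) := by
  have hcoeff := coeff_sum_C_mul_X_pow_of_injective (a := a) he.injective (Fin.last n)
  have hdeg : (∑ j, C (a j) * X ^ e j).natDegree = e (Fin.last n) :=
    (natDegree_sum_C_mul_X_pow_le he.monotone).antisymm (le_natDegree_of_ne_zero (hcoeff ▸ ha))
  rw [leadingCoeff, hdeg, hcoeff]

theorem trailingCoeff_sum_C_mul_X_pow (he : StrictMono e) (ha : a 0 ≠ 0) :
    (∑ j, C (a j) * X ^ e j).trailingCoeff = a 0 := by
  have hcoeff := coeff_sum_C_mul_X_pow_of_injective (a := a) he.injective 0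
  have hp : ∑ j, C (a j) * X ^ e j ≠ 0 := fun h => ha (by rw [← hcoeff, h, coeff_zero])
  have hdeg : (∑ j, C (a j) * X ^ e j).natTrailingDegree = e 0 :=
    (natTrailingDegree_le_of_ne_zero (hcoeff ▸ ha)).antisymm
      (le_natTrailingDegree hp fun m hm => coeff_sum_C_mul_X_pow_eq_zero fun i =>
        (hm.trans_le (he.monotone (Fin.zero_le i))).ne')
  rw [trailingCoeff, hdeg, hcoeff]

theorem eraseLead_sum_C_mul_X_pow {e : Fin (n + 2) → ℕ} {a : Fin (n + 2) → R}
    (he : StrictMono e) (ha : a (Fin.last (n + 1)) ≠ 0) :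
    (∑ j, C (a j) * X ^ e j).eraseLead =
      ∑ j : Fin (n + 1), C (a j.castSucc) * X ^ e j.castSucc := by
  rw [Fin.sum_univ_castSucc, eraseLead_add_of_natDegree_lt_right, eraseLead_C_mul_X_pow, add_zero]
  rw [natDegree_C_mul_X_pow _ _ ha]
  exact (natDegree_sum_C_mul_X_pow_le (he.comp Fin.strictMono_castSucc).monotone).trans_lt
    (he (Fin.castSucc_lt_last _))

end Semiring

theorem signVariations_sum_C_mul_X_pow {R : Type*} [CommRing R] [LinearOrder R]
    [IsStrictOrderedRing R] :
    ∀ {n : ℕ} {e : Fin (n + 1) → ℕ} {a : Fin (n + 1) → R}, StrictMono e → (∀ i, a i ≠ 0) →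
      signVariations (∑ j, C (a j) * X ^ e j) = #{i : Fin n | a i.castSucc * a i.succ < 0}
  | 0, e, a, _, _ => by simp [C_mul_X_pow_eq_monomial]
  | n + 1, e, a, he, ha => by
    have hec : StrictMono fun i : Fin (n + 1) => e i.castSucc := he.comp Fin.strictMono_castSucc
    have hlead := leadingCoeff_sum_C_mul_X_pow he (ha _)
    rw [signVariations_eq_eraseLead_add_ite (leadingCoeff_ne_zero.1 (hlead ▸ ha _)),
      eraseLead_sum_C_mul_X_pow he (ha _), signVariations_sum_C_mul_X_pow hec fun i => ha _,
      hlead, leadingCoeff_sum_C_mul_X_pow hec (ha _), Fin.card_filter_univ_castSucc]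
    simp only [sign_eq_neg_sign_iff_mul_neg (ha _), mul_comm (a (Fin.last (n + 1))),
      Fin.succ_castSucc, Fin.succ_last]

theorem trailingCoeff_X_sub_C_pos_iff {R : Type*} [Ring R] [LinearOrder R]
    [IsStrictOrderedRing R] {r : R} : 0 < (X - C r).trailingCoeff ↔ r ≤ 0 := by
  rcases eq_or_ne r 0 with rfl | hr
  · simp [trailingCoeff, natTrailingDegree_X]
  · rw [trailingCoeff_eq_coeff_zero (by simpa using hr)]
    simp [hr.le_iff_lt]

theorem pos_trailingCoeff_mul_leadingCoeff_of_roots_eq_zero {p : ℝ[X]} (hp : p ≠ 0)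
    (hroots : p.roots = 0) : 0 < p.trailingCoeff * p.leadingCoeff := by
  have hnoroot (x : ℝ) : ¬p.IsRoot x := fun hx => by simpa [hroots] using (mem_roots hp).2 hx
  have hneg (x : ℝ) (hx : p.IsRoot x) : x < 0 := absurd hx (hnoroot x)
  rw [trailingCoeff_eq_coeff_zero (by simpa [coeff_zero_eq_eval_zero] using hnoroot 0),
    coeff_zero_eq_eval_zero]
  rcases (leadingCoeff_ne_zero.2 hp).lt_or_gt with hlc | hlc
  · exact mul_pos_of_neg_of_neg (eval_lt_zero_of_roots_lt_of_leadingCoeff_nonpos hneg hlc.le) hlc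
  · exact mul_pos (zero_lt_eval_of_roots_lt_of_leadingCoeff_nonneg hneg hlc.le) hlc

theorem even_countP_pos_roots_iff {p : ℝ[X]} (hp : p ≠ 0) :
    Even (p.roots.countP (0 < ·)) ↔ 0 < p.trailingCoeff * p.leadingCoeff := by
  generalize hm : p.roots.card = m
  induction m generalizing p with
  | zero =>
    rw [Multiset.card_eq_zero] at hm
    simpa [hm] using pos_trailingCoeff_mul_leadingCoeff_of_roots_eq_zero hp hm
  | succ m ih =>
    obtain ⟨r, hr⟩ := Multiset.card_pos_iff_exists_mem.1 (hm ▸ m.succ_pos : 0 < p.roots.card)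
    obtain ⟨q, rfl⟩ := dvd_iff_isRoot.2 (isRoot_of_mem_roots hr)
    have hq : q ≠ 0 := right_ne_zero_of_mul hp
    have hroots : ((X - C r) * q).roots = r ::ₘ q.roots := by
      rw [roots_mul hp, roots_X_sub_C, Multiset.singleton_add]
    rw [hroots, Multiset.card_cons, Nat.add_right_cancel_iff] at hm
    have hc : (X - C r).trailingCoeff ≠ 0 :=
      trailingCoeff_nonzero_iff_nonzero.2 (X_sub_C_ne_zero r)
    have hT : q.trailingCoeff * q.leadingCoeff ≠ 0 :=
      mul_ne_zero (trailingCoeff_nonzero_iff_nonzero.2 hq) (leadingCoeff_ne_zero.2 hq)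
    rw [hroots, Multiset.countP_cons, trailingCoeff_mul, leadingCoeff_mul, leadingCoeff_X_sub_C,
      one_mul, mul_assoc, Nat.even_add, ih hq hm, mul_pos_iff_of_ne_zero hc hT,
      trailingCoeff_X_sub_C_pos_iff]
    rcases lt_or_ge 0 r with hr | hr
    · simp [hr, hr.not_ge]
    · simp [hr, hr.not_gt]

end Polynomial

/-- Descartes' rule of signs: if the nonzero coefficients of a real polynomial,
listed in order of increasing exponent, are `a 0, …, a n`, and `k` is the number
of sign variations, then the number `P` of positive roots counted with
multiplicity satisfies `P ≤ k` and `k - P` is even. -/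
theorem descartes_rule_of_signs
    (n : ℕ) (e : Fin (n + 1) → ℕ) (he : StrictMono e)
    (a : Fin (n + 1) → ℝ) (ha : ∀ i, a i ≠ 0)
    (p : Polynomial ℝ)
    (hp : p = ∑ i : Fin (n + 1), C (a i) * X ^ (e i))
    (k : ℕ)
    (hk : k = (Finset.univ.filter
      (fun i : Fin n => a i.castSucc * a i.succ < 0)).card)
    (P : ℕ)
    (hP : P = Multiset.card (p.roots.filter (fun x => 0 < x))) :
    P ≤ k ∧ Even (k - P) := by
  have hvar : p.signVariations = k := hp ▸ hk ▸ signVariations_sum_C_mul_X_pow he ha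
  have hp0 : p ≠ 0 := by
    rw [← trailingCoeff_nonzero_iff_nonzero, hp, trailingCoeff_sum_C_mul_X_pow he (ha 0)]
    exact ha 0
  rw [hP, ← Multiset.countP_eq_card_filter]
  have hle : p.roots.countP (0 < ·) ≤ k := hvar ▸ p.roots_countP_pos_le_signVariations
  refine ⟨hle, ?_⟩
  rw [Nat.even_sub hle, even_countP_pos_roots_iff hp0, hk, even_card_filter_mul_neg_iff ha, hp,
    trailingCoeff_sum_C_mul_X_pow he (ha 0), leadingCoeff_sum_C_mul_X_pow he (ha _)]
end

section
/- Let α₀ < α₁ < … < αₙ be real numbers and a₀, a₁, …, aₙ be nonzero real numbers, and let k be the number of indices i with aᵢ·aᵢ₊₁ < 0. Define Y(x) = a₀x^{α₀} + a₁x^{α₁} + … + aₙx^{αₙ} for x > 0, where x^{αᵢ} denotes the real power function. Then the set {x ∈ ℝ : x > 0 and Y(x) = 0} has at most k elements. -/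
/-!
If the coefficients `aⱼ, aⱼ₊₁` have opposite signs, pick `β` strictly between `αⱼ` and `αⱼ₊₁`.
The function `x ^ (-β) * Y x` has the same positive zeros as `Y`, and its derivative is again a
sum of real powers, with coefficients `aᵢ (αᵢ - β)`. The factors `αᵢ - β` change sign exactly at
`j`, so these coefficients have one sign variation fewer, while by Rolle's theorem the derivative
vanishes strictly between any two zeros of `Y`; hence `Y` has at most one zero more than the
derivative. Induction on `k` ends with coefficients of constant sign, where `Y` has no positive
zero.
-/

open Finset

theorem Finset.exists_card_le_card_add_one_of_exists_between {α : Type*} [LinearOrder α]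
    {S T : Set α} (h : ∀ x ∈ S, ∀ y ∈ S, x < y → ∃ z ∈ T, x < z ∧ z < y)
    (s : Finset α) (hs : ↑s ⊆ S) :
    ∃ u : Finset α, ↑u ⊆ T ∧ #s ≤ #u + 1 ∧ ∀ z ∈ u, ∃ y ∈ s, z < y := by
  induction s using Finset.induction_on_max with
  | empty => exact ⟨∅, by simp, by simp, by simp⟩
  | insert x s hlt ih =>
    rw [coe_insert, Set.insert_subset_iff] at hs
    obtain rfl | hne := s.eq_empty_or_nonempty
    · exact ⟨∅, by simp, by simp, by simp⟩
    obtain ⟨u, huT, hsu, hu⟩ := ih hs.2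
    obtain ⟨z, hzT, hmz, hzx⟩ :=
      h _ (hs.2 (s.max'_mem hne)) x hs.1 (hlt _ (s.max'_mem hne))
    have hzu : z ∉ u := fun hz => by
      obtain ⟨y, hy, hzy⟩ := hu z hz
      exact (hzy.trans_le (s.le_max' y hy)).not_gt hmz
    refine ⟨insert z u, ?_, ?_, ?_⟩
    · rw [coe_insert]
      exact Set.insert_subset hzT huT
    · rw [card_insert_of_notMem hzu]
      exact (card_insert_le x s).trans (by omega)
    · simp only [mem_insert, forall_eq_or_imp]
      exact ⟨⟨x, Or.inl rfl, hzx⟩, fun w hw =>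
        (hu w hw).imp fun y ⟨hy, hwy⟩ => ⟨Or.inr hy, hwy⟩⟩

theorem Set.encard_le_encard_add_one_of_exists_between {α : Type*} [LinearOrder α]
    {S T : Set α} (h : ∀ x ∈ S, ∀ y ∈ S, x < y → ∃ z ∈ T, x < z ∧ z < y) :
    S.encard ≤ T.encard + 1 := by
  refine ENat.forall_natCast_le_iff_le.mp fun m hm => ?_
  obtain ⟨t, htS, htm⟩ := exists_subset_encard_eq hm
  obtain ⟨s, rfl⟩ := (finite_of_encard_eq_coe htm).exists_finset_coe
  obtain ⟨u, huT, hsu, -⟩ := Finset.exists_card_le_card_add_one_of_exists_between h s htS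
  calc (m : ℕ∞) = #s := by rw [← htm, encard_coe_eq_coe_finsetCard]
    _ ≤ #u + 1 := by exact_mod_cast hsu
    _ = (u : Set α).encard + 1 := by rw [encard_coe_eq_coe_finsetCard]
    _ ≤ T.encard + 1 := by gcongr

theorem ne_zero_of_strictMono_of_neg_of_pos {R : Type*} [Zero R] [Preorder R] {n : ℕ}
    {c : Fin (n + 1) → R} (hc : StrictMono c) {j : Fin n}
    (hj₀ : c j.castSucc < 0) (hj₁ : 0 < c j.succ) (i : Fin (n + 1)) : c i ≠ 0 := by
  obtain hi | hi := le_or_gt i j.castSucc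
  · exact ((hc.monotone hi).trans_lt hj₀).ne
  · exact (hj₁.trans_le (hc.monotone (Fin.castSucc_lt_iff_succ_le.mp hi))).ne'

section SignVariations

variable {R : Type*} [CommRing R] [LinearOrder R] [IsStrictOrderedRing R] {n : ℕ}

def signVariations (a : Fin (n + 1) → R) : ℕ :=
  #{i : Fin n | a i.castSucc * a i.succ < 0}

theorem mul_pos_of_signVariations_eq_zero {a : Fin (n + 1) → R} (ha : ∀ i, a i ≠ 0)
    (h : signVariations a = 0) (i : Fin (n + 1)) : 0 < a 0 * a i := by
  have hpair (j : Fin n) : 0 < a j.castSucc * a j.succ := by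
    simp only [signVariations, card_eq_zero, filter_eq_empty_iff, mem_univ, true_implies,
      not_lt] at h
    exact (@h j).lt_of_ne' (mul_ne_zero (ha _) (ha _))
  induction i using Fin.induction with
  | zero => exact mul_self_pos.mpr (ha 0)
  | succ j ih =>
    refine pos_of_mul_pos_right ?_ (mul_self_nonneg (a j.castSucc))
    calc 0 < a 0 * a j.castSucc * (a j.castSucc * a j.succ) := mul_pos ih (hpair j)
      _ = _ := by ring

theorem signVariations_mul_add_one {a c : Fin (n + 1) → R} {j : Fin n}
    (hj : a j.castSucc * a j.succ < 0) (hcj : c j.castSucc * c j.succ < 0)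
    (hc : ∀ i ≠ j, 0 < c i.castSucc * c i.succ) :
    signVariations (a * c) + 1 = signVariations a := by
  have hfilter : ({i : Fin n | (a * c) i.castSucc * (a * c) i.succ < 0} : Finset (Fin n)) =
      ({i : Fin n | a i.castSucc * a i.succ < 0} : Finset (Fin n)).erase j := by
    ext i
    simp only [mem_filter, mem_erase, mem_univ, true_and, Pi.mul_apply]
    rw [mul_mul_mul_comm]
    obtain rfl | hij := eq_or_ne i j
    · simpa using (mul_pos_of_neg_of_neg hj hcj).le
    · exact ⟨fun h => ⟨hij, neg_of_mul_neg_left h (hc i hij).le⟩,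
        fun h => mul_neg_of_neg_of_pos h.2 (hc i hij)⟩
  rw [signVariations, signVariations, hfilter, card_erase_add_one (by simpa using hj)]

theorem mul_succ_pos_of_strictMono_of_neg_of_pos {c : Fin (n + 1) → R} (hc : StrictMono c)
    {j : Fin n} (hj₀ : c j.castSucc < 0) (hj₁ : 0 < c j.succ) (i : Fin n) (hij : i ≠ j) :
    0 < c i.castSucc * c i.succ := by
  have hi : c i.castSucc < c i.succ := hc Fin.castSucc_lt_succ
  obtain hij | hji := hij.lt_or_gt
  · have := hc.monotone (Fin.succ_le_castSucc_iff.mpr hij)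
    exact mul_pos_of_neg_of_neg (by linarith) (by linarith)
  · have := hc.monotone (Fin.succ_le_castSucc_iff.mpr hji)
    exact mul_pos (by linarith) (by linarith)

end SignVariations

section RpowSum

variable {ι : Type*} [Fintype ι]

noncomputable def rpowSum (a α : ι → ℝ) (x : ℝ) : ℝ :=
  ∑ i, a i * x ^ α i

theorem rpowSum_sub_const (a α : ι → ℝ) (β : ℝ) {x : ℝ} (hx : 0 < x) :
    rpowSum a (fun i => α i - β) x = rpowSum a α x / x ^ β := by
  simp only [rpowSum, sum_div, Real.rpow_sub hx, mul_div_assoc]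

theorem hasDerivAt_rpowSum (a α : ι → ℝ) {x : ℝ} (hx : 0 < x) :
    HasDerivAt (rpowSum a α) (rpowSum (a * α) (α - 1) x) x := by
  refine (HasDerivAt.fun_sum (u := univ) fun i _ =>
    (Real.hasDerivAt_rpow_const (p := α i) (Or.inl hx.ne')).const_mul (a i)).congr_deriv ?_
  simp only [rpowSum, Pi.mul_apply, Pi.sub_apply, Pi.one_apply, mul_assoc]

theorem exists_rpowSum_mul_sub_one_eq_zero {a α : ι → ℝ} {x y : ℝ} (hx : 0 < x) (hxy : x < y)
    (hx₀ : rpowSum a α x = 0) (hy₀ : rpowSum a α y = 0) :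
    ∃ z ∈ Set.Ioo x y, rpowSum (a * α) (α - 1) z = 0 :=
  exists_hasDerivAt_eq_zero hxy
    (fun _ ht => (hasDerivAt_rpowSum a α (hx.trans_le ht.1)).continuousAt.continuousWithinAt)
    (hx₀.trans hy₀.symm) fun _ ht => hasDerivAt_rpowSum a α (hx.trans ht.1)

theorem encard_rpowSum_zeros_le_add_one (a α : ι → ℝ) :
    {x | 0 < x ∧ rpowSum a α x = 0}.encard ≤
      {x | 0 < x ∧ rpowSum (a * α) (α - 1) x = 0}.encard + 1 := by
  refine Set.encard_le_encard_add_one_of_exists_between ?_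
  rintro x ⟨hx, hx₀⟩ y ⟨-, hy₀⟩ hxy
  obtain ⟨z, hz, hz₀⟩ := exists_rpowSum_mul_sub_one_eq_zero hx hxy hx₀ hy₀
  exact ⟨z, ⟨hx.trans hz.1, hz₀⟩, hz⟩

theorem rpowSum_zeros_sub_const (a α : ι → ℝ) (β : ℝ) :
    {x | 0 < x ∧ rpowSum a (fun i => α i - β) x = 0} = {x | 0 < x ∧ rpowSum a α x = 0} := by
  ext x
  refine and_congr_right fun hx => ?_
  rw [rpowSum_sub_const a α β hx, div_eq_zero_iff, or_iff_left (Real.rpow_pos_of_pos hx _).ne']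

end RpowSum

theorem rpowSum_ne_zero_of_signVariations_eq_zero {n : ℕ} {a : Fin (n + 1) → ℝ}
    (ha : ∀ i, a i ≠ 0) (h : signVariations a = 0) (α : Fin (n + 1) → ℝ) {x : ℝ} (hx : 0 < x) :
    rpowSum a α x ≠ 0 := by
  have hpos : 0 < a 0 * rpowSum a α x := by
    rw [rpowSum, mul_sum]
    refine sum_pos (fun i _ => ?_) univ_nonempty
    rw [← mul_assoc]
    exact mul_pos (mul_pos_of_signVariations_eq_zero ha h i) (Real.rpow_pos_of_pos hx _)
  exact right_ne_zero_of_mul hpos.ne'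

theorem encard_rpowSum_zeros_le_signVariations {n : ℕ} {α a : Fin (n + 1) → ℝ}
    (hα : StrictMono α) (ha : ∀ i, a i ≠ 0) :
    {x | 0 < x ∧ rpowSum a α x = 0}.encard ≤ signVariations a := by
  induction hk : signVariations a generalizing α a with
  | zero =>
    rw [Nat.cast_zero, nonpos_iff_eq_zero, Set.encard_eq_zero, Set.eq_empty_iff_forall_notMem]
    exact fun x ⟨hx, hx₀⟩ => rpowSum_ne_zero_of_signVariations_eq_zero ha hk α hx hx₀
  | succ k ih =>
    obtain ⟨j, hj⟩ : ∃ j : Fin n, a j.castSucc * a j.succ < 0 := by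
      have : 0 < signVariations a := by omega
      simpa [signVariations, filter_nonempty_iff] using this
    have hαj : α j.castSucc < α j.succ := hα Fin.castSucc_lt_succ
    set c : Fin (n + 1) → ℝ := fun i => α i - (α j.castSucc + α j.succ) / 2 with hc_def
    have hc : StrictMono c := fun _ _ h => sub_lt_sub_right (hα h) _
    have hcj₀ : c j.castSucc < 0 := by simp only [hc_def]; linarith
    have hcj₁ : 0 < c j.succ := by simp only [hc_def]; linarith
    have hvar : signVariations (a * c) = k := by
      have := signVariations_mul_add_one hj (mul_neg_of_neg_of_pos hcj₀ hcj₁)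
        (mul_succ_pos_of_strictMono_of_neg_of_pos hc hcj₀ hcj₁)
      omega
    have hderiv := ih (α := c - 1) (a := a * c) (fun _ _ h => sub_lt_sub_right (hc h) 1)
      (fun i => mul_ne_zero (ha i) (ne_zero_of_strictMono_of_neg_of_pos hc hcj₀ hcj₁ i)) hvar
    rw [← rpowSum_zeros_sub_const a α]
    calc _ ≤ {x | 0 < x ∧ rpowSum (a * c) (c - 1) x = 0}.encard + 1 :=
          encard_rpowSum_zeros_le_add_one a c
      _ ≤ k + 1 := by gcongr
      _ = ↑(k + 1) := by push_cast; rfl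

/-- Laguerre's extension of Descartes' rule of signs to real exponents:
a function `Y x = ∑ i, a i * x ^ (α i)` (real powers, `α` strictly increasing,
all `a i` nonzero) has at most `k` positive zeros, where `k` is the number of
sign variations of the coefficient sequence. -/
theorem descartes_rule_real_exponents
    (n : ℕ) (α : Fin (n + 1) → ℝ) (hα : StrictMono α)
    (a : Fin (n + 1) → ℝ) (ha : ∀ i, a i ≠ 0)
    (k : ℕ)
    (hk : k = (Finset.univ.filter
      (fun i : Fin n => a i.castSucc * a i.succ < 0)).card) :
    {x : ℝ | 0 < x ∧ ∑ i : Fin (n + 1), a i * x ^ (α i) = 0}.encard ≤ (k : ℕ∞) := by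
  subst hk
  exact encard_rpowSum_zeros_le_signVariations hα ha
end

section
/- Let α < β < γ be real numbers and a > 0, c > 0, b < 0 be real numbers. Then a·x^α + b·x^β + c·x^γ > 0 for all x > 0 if and only if (a/(γ−β))^{γ−β} · (b/(α−γ))^{α−γ} · (c/(β−α))^{β−α} > 1, where all powers are real powers of the positive bases a/(γ−β), b/(α−γ), c/(β−α). -/
/-!
Dividing by `x ^ β`, the trinomial is positive on `(0, ∞)` iff `-b < a x^(-p) + c x^q` for all
`x > 0`, where `p = β - α` and `q = γ - β`. Weighted AM-GM with weights `q / (p + q)` and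
`p / (p + q)`, applied to `(p + q) / q · a x^(-p)` and `(p + q) / p · c x^q`, bounds
`a x^(-p) + c x^q` below by a constant, since the powers of `x` cancel in the geometric mean; the
bound is attained where the two AM-GM terms agree. Raising `-b < min` to the power `p + q`
gives the stated criterion.
-/

open Real

namespace Trinomial

noncomputable def twoTermMin (u v p q : ℝ) : ℝ :=
  ((p + q) / q * u) ^ (q / (p + q)) * ((p + q) / p * v) ^ (p / (p + q))

variable {u v p q x : ℝ}

theorem weighted_geom_mean_rpow_neg_rpow {A B : ℝ} (hA : 0 ≤ A) (hB : 0 ≤ B) (hx : 0 < x) :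
    (A * x ^ (-p)) ^ (q / (p + q)) * (B * x ^ q) ^ (p / (p + q)) =
      A ^ (q / (p + q)) * B ^ (p / (p + q)) := by
  rw [mul_rpow hA (by positivity), mul_rpow hB (by positivity), ← rpow_mul hx.le,
    ← rpow_mul hx.le, mul_mul_mul_comm, ← rpow_add hx,
    show -p * (q / (p + q)) + q * (p / (p + q)) = 0 by ring, rpow_zero, mul_one]

theorem eq_rpow_mul (hx : 0 < x) (a b c α β γ : ℝ) :
    a * x ^ α + b * x ^ β + c * x ^ γ = x ^ β * (a * x ^ (-(β - α)) + c * x ^ (γ - β) + b) := by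
  have hα : x ^ β * x ^ (-(β - α)) = x ^ α := by rw [← rpow_add hx]; ring_nf
  have hγ : x ^ β * x ^ (γ - β) = x ^ γ := by rw [← rpow_add hx]; ring_nf
  linear_combination a * hα.symm + c * hγ.symm

variable (hu : 0 < u) (hv : 0 < v) (hp : 0 < p) (hq : 0 < q)
include hu hv hp hq

theorem twoTermMin_le (hx : 0 < x) : twoTermMin u v p q ≤ u * x ^ (-p) + v * x ^ q := by
  have hs : 0 < p + q := add_pos hp hq
  have amgm := geom_mean_le_arith_mean2_weighted (p₁ := (p + q) / q * u * x ^ (-p))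
    (p₂ := (p + q) / p * v * x ^ q) (div_pos hq hs).le (div_pos hp hs).le
    (by positivity) (by positivity) (by field_simp; ring)
  rw [weighted_geom_mean_rpow_neg_rpow (by positivity) (by positivity) hx] at amgm
  exact amgm.trans_eq (by field_simp)

theorem exists_eq_twoTermMin : ∃ x > 0, u * x ^ (-p) + v * x ^ q = twoTermMin u v p q := by
  have hs : 0 < p + q := add_pos hp hq
  set x₀ := (p * u / (q * v)) ^ (p + q)⁻¹
  have hx₀ : 0 < x₀ := by positivity
  have hbalance : (p + q) / q * u * x₀ ^ (-p) = (p + q) / p * v * x₀ ^ q := by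
    have hsplit : x₀ ^ q = x₀ ^ (p + q) * x₀ ^ (-p) := by rw [← rpow_add hx₀]; ring_nf
    rw [hsplit, rpow_inv_rpow (by positivity) hs.ne']
    field_simp
  refine ⟨x₀, hx₀, ?_⟩
  rw [twoTermMin, ← weighted_geom_mean_rpow_neg_rpow (by positivity) (by positivity) hx₀,
    hbalance, ← rpow_add (by positivity), ← add_div, add_comm q p, div_self hs.ne',
    rpow_one, ← hbalance]
  field_simp at hbalance ⊢
  linear_combination -hbalance

theorem twoTermMin_rpow :
    twoTermMin u v p q ^ (p + q) = (p + q) ^ (p + q) * ((u / q) ^ q * (v / p) ^ p) := by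
  have hs : 0 < p + q := add_pos hp hq
  rw [twoTermMin, mul_rpow (by positivity) (by positivity), ← rpow_mul (by positivity),
    ← rpow_mul (by positivity), div_mul_cancel₀ _ hs.ne', div_mul_cancel₀ _ hs.ne',
    div_mul_eq_mul_div, div_mul_eq_mul_div, mul_div_assoc, mul_div_assoc,
    mul_rpow hs.le (by positivity), mul_rpow hs.le (by positivity), rpow_add hs]
  ring

theorem forall_lt_add_rpow_iff {k : ℝ} (hk : 0 ≤ k) :
    (∀ x : ℝ, 0 < x → k < u * x ^ (-p) + v * x ^ q) ↔
      (k / (p + q)) ^ (p + q) < (u / q) ^ q * (v / p) ^ p := by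
  have hs : 0 < p + q := add_pos hp hq
  calc (∀ x : ℝ, 0 < x → k < u * x ^ (-p) + v * x ^ q) ↔ k < twoTermMin u v p q := by
        refine ⟨fun h ↦ ?_, fun h x hx ↦ h.trans_le (twoTermMin_le hu hv hp hq hx)⟩
        obtain ⟨x₀, hx₀, heq⟩ := exists_eq_twoTermMin hu hv hp hq
        exact heq ▸ h x₀ hx₀
    _ ↔ k ^ (p + q) < twoTermMin u v p q ^ (p + q) :=
        (rpow_lt_rpow_iff hk (by unfold twoTermMin; positivity) hs).symm
    _ ↔ _ := by
        rw [twoTermMin_rpow hu hv hp hq, div_rpow hk hs.le, div_lt_iff₀ (by positivity),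
          mul_comm]

end Trinomial

/-- Proposition 2: positivity criterion for trinomials. For `α < β < γ`,
`a > 0`, `c > 0`, `b < 0`, the trinomial `a x^α + b x^β + c x^γ` is positive on
`(0, ∞)` iff `(a/(γ-β))^(γ-β) * (b/(α-γ))^(α-γ) * (c/(β-α))^(β-α) > 1`. -/
theorem trinomial_positive_iff
    (α β γ a b c : ℝ)
    (hαβ : α < β) (hβγ : β < γ)
    (ha : 0 < a) (hc : 0 < c) (hb : b < 0) :
    (∀ x : ℝ, 0 < x → 0 < a * x ^ α + b * x ^ β + c * x ^ γ) ↔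
      1 < (a / (γ - β)) ^ (γ - β) * (b / (α - γ)) ^ (α - γ) *
        (c / (β - α)) ^ (β - α) := by
  have hp : 0 < β - α := sub_pos.2 hαβ
  have hq : 0 < γ - β := sub_pos.2 hβγ
  have hb' : 0 < -b / (γ - α) := div_pos (neg_pos.2 hb) (by linarith)
  have hcrit : (a / (γ - β)) ^ (γ - β) * (b / (α - γ)) ^ (α - γ) * (c / (β - α)) ^ (β - α) =
      (a / (γ - β)) ^ (γ - β) * (c / (β - α)) ^ (β - α) / (-b / (γ - α)) ^ (γ - α) := by
    rw [show b / (α - γ) = -b / (γ - α) by rw [← neg_sub, div_neg, neg_div],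
      show α - γ = -(γ - α) by ring, rpow_neg hb'.le]
    ring
  rw [hcrit, one_lt_div (rpow_pos_of_pos hb' _), show γ - α = β - α + (γ - β) by ring,
    ← Trinomial.forall_lt_add_rpow_iff ha hc hp hq (neg_nonneg.2 hb.le)]
  refine forall₂_congr fun x hx ↦ ?_
  rw [Trinomial.eq_rpow_mul hx, mul_pos_iff_of_pos_left (rpow_pos_of_pos hx β)]
  constructor <;> intro <;> linarith
end

section
/- Let α < β < γ be real numbers and a > 0, c > 0, b < 0 be real numbers, and set A = a/(γ−β), B = b/(α−γ), C = c/(β−α) (all positive). Let Y(x) = a·x^α + b·x^β + c·x^γ for x > 0. Then there exists x₁ > 0 with Y(x₁) = 0 and Y′(x₁) = 0 if and only if A^{γ−β} · B^{α−γ} · C^{β−α} = 1. -/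
/-! Write `u = A x^α`, `v = B x^β`, `w = C x^γ`, so that `a x^α = (γ-β) u`, `b x^β = (α-γ) v`,
`c x^γ = (β-α) w`. The conditions `Y x = 0` and `x Y'(x) = 0` form a Vandermonde-type linear
system in `(u, v, w)` whose solutions are exactly `u = v = w`. In logarithmic coordinates
`t = log x` this says that the three lines `log A + α t`, `log B + β t`, `log C + γ t` meet at `t`,
and three lines are concurrent iff `(γ-β) log A + (α-γ) log B + (β-α) log C = 0`. -/

open Real

theorem vandermonde_system_eq_zero_iff {R : Type*} [CommRing R] [NoZeroDivisors R]
    {α β γ u v w : R} (hαβ : α ≠ β) (hβγ : β ≠ γ) (hαγ : α ≠ γ) :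
    ((γ - β) * u + (α - γ) * v + (β - α) * w = 0 ∧
        α * ((γ - β) * u) + β * ((α - γ) * v) + γ * ((β - α) * w) = 0) ↔
      u = v ∧ v = w := by
  constructor
  · rintro ⟨h₀, h₁⟩
    have huv : (α - γ) * (γ - β) * (u - v) = 0 := by linear_combination h₁ - γ * h₀
    have hvw : (β - α) * (α - γ) * (v - w) = 0 := by linear_combination h₁ - α * h₀
    simp only [mul_eq_zero, sub_eq_zero] at huv hvw
    exact ⟨by tauto, by tauto⟩
  · rintro ⟨rfl, rfl⟩
    constructor <;> ring

theorem exists_lines_concurrent_iff {K : Type*} [Field K] {α β γ p q r : K} (hαβ : α ≠ β) :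
    (∃ t, p + α * t = q + β * t ∧ q + β * t = r + γ * t) ↔
      (γ - β) * p + (α - γ) * q + (β - α) * r = 0 := by
  have hβα : β - α ≠ 0 := sub_ne_zero.mpr hαβ.symm
  constructor
  · rintro ⟨t, hpq, hqr⟩
    linear_combination (γ - β) * hpq + (α - β) * hqr
  · intro h
    refine ⟨(p - q) / (β - α), ?_, ?_⟩
    · field_simp
      ring
    · field_simp
      linear_combination -h

theorem Real.rpow_mul_rpow_mul_rpow_eq_one_iff {A B C : ℝ} (hA : 0 < A) (hB : 0 < B) (hC : 0 < C)
    (p q r : ℝ) : A ^ p * B ^ q * C ^ r = 1 ↔ p * log A + q * log B + r * log C = 0 := by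
  rw [rpow_def_of_pos hA, rpow_def_of_pos hB, rpow_def_of_pos hC, ← exp_add, ← exp_add,
    exp_eq_one_iff]
  constructor <;> intro h <;> linear_combination h

theorem Real.mul_rpow_eq_exp {A x : ℝ} (hA : 0 < A) (hx : 0 < x) (α : ℝ) :
    A * x ^ α = exp (log A + α * log x) := by
  rw [exp_add, exp_log hA, rpow_def_of_pos hx, mul_comm α]

theorem Real.exists_pos_mul_rpow_eq_iff {A B C : ℝ} (hA : 0 < A) (hB : 0 < B) (hC : 0 < C)
    (α β γ : ℝ) :
    (∃ x, 0 < x ∧ A * x ^ α = B * x ^ β ∧ B * x ^ β = C * x ^ γ) ↔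
      ∃ t, log A + α * t = log B + β * t ∧ log B + β * t = log C + γ * t := by
  constructor
  · rintro ⟨x, hx, h₁, h₂⟩
    refine ⟨log x, exp_injective ?_, exp_injective ?_⟩
    · rwa [← mul_rpow_eq_exp hA hx, ← mul_rpow_eq_exp hB hx]
    · rwa [← mul_rpow_eq_exp hB hx, ← mul_rpow_eq_exp hC hx]
  · rintro ⟨t, h₁, h₂⟩
    refine ⟨exp t, exp_pos t, ?_, ?_⟩ <;>
      simp only [mul_rpow_eq_exp hA (exp_pos t), mul_rpow_eq_exp hB (exp_pos t),
        mul_rpow_eq_exp hC (exp_pos t), log_exp, h₁, h₂]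

theorem hasDerivAt_trinomial (a b c α β γ : ℝ) {x : ℝ} (hx : x ≠ 0) :
    HasDerivAt (fun y : ℝ => a * y ^ α + b * y ^ β + c * y ^ γ)
      ((α * (a * x ^ α) + β * (b * x ^ β) + γ * (c * x ^ γ)) / x) x := by
  have hpow (p : ℝ) := hasDerivAt_rpow_const (p := p) (Or.inl hx)
  refine ((((hpow α).const_mul a).add ((hpow β).const_mul b)).add
    ((hpow γ).const_mul c)).congr_deriv ?_
  rw [rpow_sub_one hx, rpow_sub_one hx, rpow_sub_one hx]
  ring

theorem trinomial_eq_zero_and_deriv_eq_zero_iff {α β γ a b c x : ℝ}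
    (hαβ : α ≠ β) (hβγ : β ≠ γ) (hαγ : α ≠ γ) (hx : x ≠ 0) :
    (a * x ^ α + b * x ^ β + c * x ^ γ = 0 ∧
        deriv (fun y : ℝ => a * y ^ α + b * y ^ β + c * y ^ γ) x = 0) ↔
      a / (γ - β) * x ^ α = b / (α - γ) * x ^ β ∧
        b / (α - γ) * x ^ β = c / (β - α) * x ^ γ := by
  have hu : a * x ^ α = (γ - β) * (a / (γ - β) * x ^ α) := by
    field_simp [sub_ne_zero.mpr hβγ.symm]
  have hv : b * x ^ β = (α - γ) * (b / (α - γ) * x ^ β) := by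
    field_simp [sub_ne_zero.mpr hαγ]
  have hw : c * x ^ γ = (β - α) * (c / (β - α) * x ^ γ) := by
    field_simp [sub_ne_zero.mpr hαβ.symm]
  rw [(hasDerivAt_trinomial a b c α β γ hx).deriv, div_eq_zero_iff, or_iff_left hx, hu, hv, hw]
  exact vandermonde_system_eq_zero_iff hαβ hβγ hαγ

/-- Double-root criterion for trinomials. For `α < β < γ`, `a > 0`, `c > 0`,
`b < 0`, with `A = a/(γ-β)`, `B = b/(α-γ)`, `C = c/(β-α)`, the trinomial
`Y x = a x^α + b x^β + c x^γ` has a positive double root iff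
`A^(γ-β) * B^(α-γ) * C^(β-α) = 1`. -/
theorem trinomial_double_root_iff
    (α β γ a b c : ℝ)
    (hαβ : α < β) (hβγ : β < γ)
    (ha : 0 < a) (hc : 0 < c) (hb : b < 0)
    (A B C : ℝ)
    (hA : A = a / (γ - β)) (hB : B = b / (α - γ)) (hC : C = c / (β - α))
    (Y : ℝ → ℝ) (hY : Y = fun x : ℝ => a * x ^ α + b * x ^ β + c * x ^ γ) :
    (∃ x₁ : ℝ, 0 < x₁ ∧ Y x₁ = 0 ∧ deriv Y x₁ = 0) ↔
      A ^ (γ - β) * B ^ (α - γ) * C ^ (β - α) = 1 := by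
  have hA0 : 0 < A := hA ▸ div_pos ha (sub_pos.mpr hβγ)
  have hB0 : 0 < B := hB ▸ div_pos_of_neg_of_neg hb (by linarith)
  have hC0 : 0 < C := hC ▸ div_pos hc (sub_pos.mpr hαβ)
  rw [rpow_mul_rpow_mul_rpow_eq_one_iff hA0 hB0 hC0, ← exists_lines_concurrent_iff hαβ.ne,
    ← exists_pos_mul_rpow_eq_iff hA0 hB0 hC0, hY, hA, hB, hC]
  refine exists_congr fun x => and_congr_right fun hx => ?_
  exact trinomial_eq_zero_and_deriv_eq_zero_iff hαβ.ne hβγ.ne (hαβ.trans hβγ).ne hx.ne'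
end

section
/- Let α < β < γ be real numbers and a > 0, c > 0, b < 0 be real numbers with A = a/(γ−β), B = b/(α−γ), C = c/(β−α), and suppose A^{γ−β} · B^{α−γ} · C^{β−α} = 1. Then the point x₁ = (C/B)^{1/(β−γ)} satisfies x₁ = (A/C)^{1/(γ−α)} = (B/A)^{1/(α−β)}, and Y(x₁) = 0 and Y′(x₁) = 0, where Y(x) = a·x^α + b·x^β + c·x^γ. -/
/-!
With `a = (γ-β) A`, `b = (α-γ) B`, `c = (β-α) C`, the three terms of `Y` are weighted copies of
`A x^α`, `B x^β`, `C x^γ`. Since `α(γ-β) + β(α-γ) + γ(β-α) = 0`, the weighted product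
`(A x^α)^(γ-β) (B x^β)^(α-γ) (C x^γ)^(β-α)` does not depend on `x`; by hypothesis it is `1`.
The point `x₁` is where `B x^β = C x^γ`, and the product then forces `A x^α` to take the same
value `m`. Hence `Y(x₁) = m((γ-β) + (α-γ) + (β-α)) = 0` and
`x₁ Y'(x₁) = m(α(γ-β) + β(α-γ) + γ(β-α)) = 0`.
-/

open Real

lemma mul_rpow_eq_mul_rpow_iff {x P Q p q : ℝ} (hx : 0 < x) (hP : 0 < P) (hQ : 0 < Q)
    (hpq : p ≠ q) : P * x ^ p = Q * x ^ q ↔ x = (Q / P) ^ (1 / (p - q)) := by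
  have hxq : 0 < x ^ q := rpow_pos_of_pos hx q
  rw [one_div, eq_rpow_inv hx.le (div_pos hQ hP).le (sub_ne_zero.2 hpq), rpow_sub hx,
    div_eq_div_iff hxq.ne' hP.ne', mul_comm P]

lemma weighted_prod_mul_rpow_eq_weighted_prod {x A B C : ℝ} (α β γ : ℝ) (hx : 0 < x)
    (hA : 0 ≤ A) (hB : 0 ≤ B) (hC : 0 ≤ C) :
    (A * x ^ α) ^ (γ - β) * (B * x ^ β) ^ (α - γ) * (C * x ^ γ) ^ (β - α) =
      A ^ (γ - β) * B ^ (α - γ) * C ^ (β - α) := by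
  have hx_pow : x ^ (α * (γ - β)) * x ^ (β * (α - γ)) * x ^ (γ * (β - α)) = 1 := by
    rw [← rpow_add hx, ← rpow_add hx, ← rpow_zero x]
    ring_nf
  rw [mul_rpow hA (rpow_nonneg hx.le _), mul_rpow hB (rpow_nonneg hx.le _),
    mul_rpow hC (rpow_nonneg hx.le _), ← rpow_mul hx.le, ← rpow_mul hx.le, ← rpow_mul hx.le]
  linear_combination (A ^ (γ - β) * B ^ (α - γ) * C ^ (β - α)) * hx_pow

lemma eq_of_rpow_mul_rpow_mul_rpow_eq_one {P Q α β γ : ℝ} (hP : 0 ≤ P) (hQ : 0 < Q)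
    (hβγ : β ≠ γ) (h : P ^ (γ - β) * Q ^ (α - γ) * Q ^ (β - α) = 1) : P = Q := by
  have hQQ : Q ^ (α - γ) * Q ^ (β - α) * Q ^ (γ - β) = 1 := by
    rw [← rpow_add hQ, ← rpow_add hQ, ← rpow_zero Q]
    ring_nf
  have hpow : P ^ (γ - β) = Q ^ (γ - β) := by
    linear_combination (Q ^ (γ - β)) * h - P ^ (γ - β) * hQQ
  exact (rpow_left_inj hP hQ.le (sub_ne_zero.2 hβγ.symm)).1 hpow

lemma hasDerivAt_rpow_trinomial {x : ℝ} (a b c α β γ : ℝ) (hx : 0 < x) :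
    HasDerivAt (fun x : ℝ => a * x ^ α + b * x ^ β + c * x ^ γ)
      ((a * α * x ^ α + b * β * x ^ β + c * γ * x ^ γ) / x) x := by
  have hderiv (p : ℝ) : HasDerivAt (fun x : ℝ => x ^ p) (x ^ p / x * p) x := by
    simpa only [rpow_sub_one hx.ne', mul_comm p] using
      hasDerivAt_rpow_const (p := p) (Or.inl hx.ne')
  exact ((((hderiv α).const_mul a).add ((hderiv β).const_mul b)).add
    ((hderiv γ).const_mul c)).congr_deriv (by ring)

/-- Location of the double root of a trinomial. For `α < β < γ`, `a > 0`,
`c > 0`, `b < 0`, with `A = a/(γ-β)`, `B = b/(α-γ)`, `C = c/(β-α)` and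
`A^(γ-β) * B^(α-γ) * C^(β-α) = 1`, the point `x₁ = (C/B)^(1/(β-γ))` equals
`(A/C)^(1/(γ-α))` and `(B/A)^(1/(α-β))`, and is a double root of
`Y x = a x^α + b x^β + c x^γ`. -/
theorem trinomial_double_root_location
    (α β γ a b c : ℝ)
    (hαβ : α < β) (hβγ : β < γ)
    (ha : 0 < a) (hc : 0 < c) (hb : b < 0)
    (A B C : ℝ)
    (hA : A = a / (γ - β)) (hB : B = b / (α - γ)) (hC : C = c / (β - α))
    (hcrit : A ^ (γ - β) * B ^ (α - γ) * C ^ (β - α) = 1)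
    (Y : ℝ → ℝ) (hY : Y = fun x : ℝ => a * x ^ α + b * x ^ β + c * x ^ γ)
    (x₁ : ℝ) (hx₁ : x₁ = (C / B) ^ (1 / (β - γ))) :
    x₁ = (A / C) ^ (1 / (γ - α)) ∧ x₁ = (B / A) ^ (1 / (α - β)) ∧
      Y x₁ = 0 ∧ deriv Y x₁ = 0 := by
  have hA0 : 0 < A := hA ▸ div_pos ha (by linarith)
  have hB0 : 0 < B := hB ▸ div_pos_of_neg_of_neg hb (by linarith)
  have hC0 : 0 < C := hC ▸ div_pos hc (by linarith)
  have hx0 : 0 < x₁ := hx₁ ▸ rpow_pos_of_pos (div_pos hC0 hB0) _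
  have hBC : B * x₁ ^ β = C * x₁ ^ γ := (mul_rpow_eq_mul_rpow_iff hx0 hB0 hC0 hβγ.ne).2 hx₁
  have hAB : A * x₁ ^ α = B * x₁ ^ β := by
    rw [← weighted_prod_mul_rpow_eq_weighted_prod α β γ hx0 hA0.le hB0.le hC0.le, ← hBC] at hcrit
    exact eq_of_rpow_mul_rpow_mul_rpow_eq_one (by positivity) (by positivity) hβγ.ne hcrit
  have ha' : a = A * (γ - β) := by rw [hA, div_mul_cancel₀]; linarith
  have hb' : b = B * (α - γ) := by rw [hB, div_mul_cancel₀]; linarith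
  have hc' : c = C * (β - α) := by rw [hC, div_mul_cancel₀]; linarith
  refine ⟨(mul_rpow_eq_mul_rpow_iff hx0 hC0 hA0 (by linarith)).1 (hAB.trans hBC).symm,
    (mul_rpow_eq_mul_rpow_iff hx0 hA0 hB0 hαβ.ne).1 hAB, ?_, ?_⟩
  · rw [hY, ha', hb', hc']
    linear_combination (γ - β) * hAB + (α - β) * hBC
  · rw [hY, (hasDerivAt_rpow_trinomial a b c α β γ hx0).deriv, div_eq_zero_iff, ha', hb', hc']
    left
    linear_combination α * (γ - β) * hAB + γ * (α - β) * hBC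
end

section
/- Let p(x) = a₀ + a₁x + a₂x² + a₃x³ + a₄x⁴ be a real polynomial with a₀ > 0, a₁ < 0, a₂ < 0, a₃ < 0, a₄ > 0. If p(x) ≠ 0 for all x > 0, then p(x) ≠ 0 for all x < 0. (In other words, for such sign patterns, zero positive roots forces zero negative roots: the combination (P,N) = (0,2) is impossible.) -/
lemma odd_part_pos_of_neg {a₁ a₃ x : ℝ} (h₁ : a₁ < 0) (h₃ : a₃ < 0) (hx : x < 0) :
    0 < a₁ * x + a₃ * x ^ 3 := by
  have hx3 : x ^ 3 < 0 := Odd.pow_neg (by decide) hx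
  nlinarith [mul_pos_of_neg_of_neg h₁ hx, mul_pos_of_neg_of_neg h₃ hx3]

theorem deg4_no_pos_roots_implies_no_neg_roots_general
    (a₀ a₁ a₂ a₃ a₄ : ℝ)
    (h₀ : 0 < a₀) (h₁ : a₁ < 0) (h₃ : a₃ < 0)
    (hpos : ∀ x : ℝ, 0 < x →
      a₀ + a₁ * x + a₂ * x ^ 2 + a₃ * x ^ 3 + a₄ * x ^ 4 ≠ 0) :
    ∀ x : ℝ, x < 0 →
      a₀ + a₁ * x + a₂ * x ^ 2 + a₃ * x ^ 3 + a₄ * x ^ 4 ≠ 0 := by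
  intro x hx hroot
  set p : ℝ → ℝ := fun t => a₀ + a₁ * t + a₂ * t ^ 2 + a₃ * t ^ 3 + a₄ * t ^ 4
  -- Reflecting a negative root subtracts twice the (positive) odd part, so `p (-x) < 0 < p 0`.
  have hreflect : p (-x) = p x - 2 * (a₁ * x + a₃ * x ^ 3) := by simp only [p]; ring
  have hneg : p (-x) < 0 := by
    have : p x = 0 := hroot
    linarith [odd_part_pos_of_neg h₁ h₃ hx]
  have hp0 : 0 < p 0 := by simpa [p] using h₀
  have hcont : Continuous p := by fun_prop
  obtain ⟨c, hc, hpc⟩ := intermediate_value_Ioo' (neg_nonneg.2 hx.le) hcont.continuousOn ⟨hneg, hp0⟩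
  exact hpos c hc.1 hpc

/-- Grabiner's observation: for a degree-4 polynomial with sign sequence
`+,-,-,-,+` (constant term first), if it has no positive roots then it has no
negative roots, i.e. `(P, N) = (0, 2)` is impossible. -/
theorem deg4_no_pos_roots_implies_no_neg_roots
    (a₀ a₁ a₂ a₃ a₄ : ℝ)
    (h₀ : 0 < a₀) (h₁ : a₁ < 0) (h₂ : a₂ < 0) (h₃ : a₃ < 0) (h₄ : 0 < a₄)
    (hpos : ∀ x : ℝ, 0 < x →
      a₀ + a₁ * x + a₂ * x ^ 2 + a₃ * x ^ 3 + a₄ * x ^ 4 ≠ 0) :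
    ∀ x : ℝ, x < 0 →
      a₀ + a₁ * x + a₂ * x ^ 2 + a₃ * x ^ 3 + a₄ * x ^ 4 ≠ 0 :=
  deg4_no_pos_roots_implies_no_neg_roots_general a₀ a₁ a₂ a₃ a₄ h₀ h₁ h₃ hpos
end

section
/- There is no real polynomial p(x) = a₀ + a₁x + a₂x² + a₃x³ + a₄x⁴ + a₅x⁵ with a₀ > 0, a₁ > 0, a₂ < 0, a₃ > 0, a₄ < 0, a₅ < 0 such that p has exactly 3 positive real roots counted with multiplicity and no negative real roots. -/
/-!
Since `p` has no roots `≤ 0`, it factors as `(X - r₁)(X - r₂)(X - r₃) q` with `rᵢ > 0` and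
`q = a X² + b X + c` without real roots, so `b² < 4ac` and `a = a₅ < 0`. With `eₖ` the elementary
symmetric functions of the `rᵢ`, the signs of the coefficients of `X⁴` and `X` read
`b < e₁ a` and `e₃ b < e₂ c`. Together with `b² < 4ac` they force `e₁ e₂ < 4 e₃`, contradicting
`9 e₃ ≤ e₁ e₂`.
-/

open Polynomial

theorem nine_mul_mul_mul_le_add_add_mul_add_add {x y z : ℝ} (hx : 0 ≤ x) (hy : 0 ≤ y)
    (hz : 0 ≤ z) : 9 * (x * y * z) ≤ (x + y + z) * (x * y + x * z + y * z) := by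
  nlinarith [mul_nonneg hx (sq_nonneg (y - z)), mul_nonneg hy (sq_nonneg (x - z)),
    mul_nonneg hz (sq_nonneg (x - y))]

theorem discrim_lt_zero_of_forall_ne_zero {a b c : ℝ} (ha : a ≠ 0)
    (h : ∀ x, a * (x * x) + b * x + c ≠ 0) : discrim a b c < 0 := by
  by_contra! hd
  obtain ⟨x, hx⟩ := exists_quadratic_eq_zero ha ⟨√(discrim a b c), (Real.mul_self_sqrt hd).symm⟩
  exact h x hx

namespace Polynomial

theorem filter_roots_pos_eq_roots {p : ℝ[X]} (h₀ : p.eval 0 ≠ 0)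
    (hneg : ∀ x < 0, p.eval x ≠ 0) : p.roots.filter (0 < ·) = p.roots := by
  refine Multiset.filter_eq_self.2 fun x hx => ?_
  have hx : p.eval x = 0 := (mem_roots'.1 hx).2
  rcases lt_trichotomy x 0 with hx₀ | rfl | hx₀
  · exact absurd hx (hneg x hx₀)
  · exact absurd hx h₀
  · exact hx₀

theorem exists_eq_prod_X_sub_C_mul_quadratic {p : ℝ[X]}
    (hp : p.natDegree = Multiset.card p.roots + 2) :
    ∃ a b c : ℝ, discrim a b c < 0 ∧
      p = (p.roots.map fun r => X - C r).prod * (C a * X ^ 2 + C b * X + C c) := by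
  obtain ⟨q, hpq, hcard, hq⟩ := exists_prod_multiset_X_sub_C_mul p
  have hq₂ : q.natDegree = 2 := by omega
  have hq₀ : q ≠ 0 := by rintro rfl; simp at hq₂
  have hq_eq := eq_quadratic_of_degree_le_two (degree_le_of_natDegree_le hq₂.le)
  refine ⟨q.coeff 2, q.coeff 1, q.coeff 0,
    discrim_lt_zero_of_forall_ne_zero ?_ fun x hx => ?_, by rw [← hq_eq, hpq]⟩
  · rw [← hq₂]
    exact leadingCoeff_ne_zero.2 hq₀
  · have hx : x ∈ q.roots := by
      rw [mem_roots hq₀, IsRoot, hq_eq]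
      simp only [eval_add, eval_mul, eval_C, eval_X, eval_pow]
      linear_combination hx
    simp [hq] at hx

theorem X_sub_C_mul_X_sub_C_mul_X_sub_C_mul_quadratic {R : Type*} [CommRing R]
    (r₁ r₂ r₃ a b c : R) :
    (X - C r₁) * (X - C r₂) * (X - C r₃) * (C a * X ^ 2 + C b * X + C c) =
      C a * X ^ 5 + C (b - (r₁ + r₂ + r₃) * a) * X ^ 4
      + C (c - (r₁ + r₂ + r₃) * b + (r₁ * r₂ + r₁ * r₃ + r₂ * r₃) * a) * X ^ 3
      + C (-(r₁ + r₂ + r₃) * c + (r₁ * r₂ + r₁ * r₃ + r₂ * r₃) * b - r₁ * r₂ * r₃ * a) * X ^ 2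
      + C ((r₁ * r₂ + r₁ * r₃ + r₂ * r₃) * c - r₁ * r₂ * r₃ * b) * X
      + C (-(r₁ * r₂ * r₃ * c)) := by
  simp only [map_add, map_sub, map_mul, map_neg]
  ring

theorem coeff_one_nonpos_of_coeff_five_neg_of_coeff_four_neg {r₁ r₂ r₃ a b c : ℝ}
    (hr₁ : 0 < r₁) (hr₂ : 0 < r₂) (hr₃ : 0 < r₃) (hd : discrim a b c < 0)
    (h₅ : ((X - C r₁) * (X - C r₂) * (X - C r₃) * (C a * X ^ 2 + C b * X + C c)).coeff 5 < 0)
    (h₄ : ((X - C r₁) * (X - C r₂) * (X - C r₃) * (C a * X ^ 2 + C b * X + C c)).coeff 4 < 0) :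
    ((X - C r₁) * (X - C r₂) * (X - C r₃) * (C a * X ^ 2 + C b * X + C c)).coeff 1 ≤ 0 := by
  rw [X_sub_C_mul_X_sub_C_mul_X_sub_C_mul_quadratic] at h₅ h₄ ⊢
  simp only [coeff_add, coeff_C_mul_X_pow, coeff_C_mul_X, coeff_C] at h₅ h₄ ⊢
  norm_num at h₅ h₄ ⊢
  have hmean := nine_mul_mul_mul_le_add_add_mul_add_add hr₁.le hr₂.le hr₃.le
  set e₁ := r₁ + r₂ + r₃
  set e₂ := r₁ * r₂ + r₁ * r₃ + r₂ * r₃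
  set e₃ := r₁ * r₂ * r₃
  have he₁ : 0 < e₁ := by positivity
  have he₂ : 0 < e₂ := by positivity
  have he₃ : 0 < e₃ := by positivity
  rw [discrim] at hd
  by_contra! h₁
  have hb : b < 0 := by nlinarith
  -- `e₂ b² < 4 a e₂ c < 4 a e₃ b`, then divide by `b < 0`
  have h : 4 * a * e₃ < e₂ * b := by nlinarith
  have : e₁ * e₂ < 4 * e₃ := by nlinarith
  linarith

end Polynomial

/-- Impossibility for degree 5: no polynomial with sign sequence `+,+,-,+,-,-`
(constant term first) has exactly 3 positive roots (with multiplicity) and no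
negative roots. -/
theorem deg5_sign_sequence_impossibility :
    ¬ ∃ (a₀ a₁ a₂ a₃ a₄ a₅ : ℝ) (p : Polynomial ℝ),
      0 < a₀ ∧ 0 < a₁ ∧ a₂ < 0 ∧ 0 < a₃ ∧ a₄ < 0 ∧ a₅ < 0 ∧
      p = C a₀ + C a₁ * X + C a₂ * X ^ 2 + C a₃ * X ^ 3 + C a₄ * X ^ 4
        + C a₅ * X ^ 5 ∧
      Multiset.card (p.roots.filter (fun x => 0 < x)) = 3 ∧
      (∀ x : ℝ, x < 0 → p.eval x ≠ 0) := by
  rintro ⟨a₀, a₁, a₂, a₃, a₄, a₅, p, h₀, h₁, -, -, h₄, h₅, hp, hpos, hneg⟩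
  have hdeg : p.natDegree = 5 := by rw [hp]; compute_degree!; exact h₅.ne
  obtain ⟨r₁, r₂, r₃, hr⟩ := Multiset.card_eq_three.1 hpos
  have hr_pos : ∀ r ∈ ({r₁, r₂, r₃} : Multiset ℝ), 0 < r :=
    fun r h => (Multiset.mem_filter.1 (hr ▸ h)).2
  rw [filter_roots_pos_eq_roots (by simp [hp, h₀.ne']) hneg] at hr hpos
  obtain ⟨a, b, c, hd, hfac⟩ := exists_eq_prod_X_sub_C_mul_quadratic (by rw [hdeg, hpos])
  simp only [hr, Multiset.insert_eq_cons, Multiset.map_cons, Multiset.prod_cons,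
    Multiset.map_singleton, Multiset.prod_singleton, ← mul_assoc] at hfac
  refine (coeff_one_nonpos_of_coeff_five_neg_of_coeff_four_neg (hr_pos r₁ (by simp))
    (hr_pos r₂ (by simp)) (hr_pos r₃ (by simp)) hd ?_ ?_).not_gt ?_ <;>
    simpa [← hfac, hp, coeff_X, coeff_C]
end

section
/- Let p(x) = a₀ + a₁x + a₂x² + a₃x³ + a₄x⁴ + a₅x⁵ + a₆x⁶ be a real polynomial with a₀ > 0, a₁ > 0, a₂ < 0, a₃ > 0, a₄ < 0, a₅ > 0, a₆ > 0. If p has no negative real roots, then the number of positive real roots of p counted with multiplicity is neither 2 nor 4. -/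
/-!
If `r > 0` were a root of `p`, then `p(-r) = p(r) - 2 (a₁ r + a₃ r³ + a₅ r⁵) < 0`, while
`p(0) = a₀ > 0`; by the intermediate value theorem `p` would then vanish on `(-r, 0)`.
So `p` has no positive roots at all.
-/

open Polynomial

lemma pos_of_nonpos_of_forall_neg_ne_zero {f : ℝ → ℝ} (hf : Continuous f) (h0 : 0 < f 0)
    (hneg : ∀ x < 0, f x ≠ 0) {x : ℝ} (hx : x ≤ 0) : 0 < f x := by
  by_contra! hfx
  obtain ⟨c, ⟨hxc, hc0⟩, hfc⟩ :=
    intermediate_value_Icc hx hf.continuousOn ⟨hfx, h0.le⟩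
  rcases hc0.lt_or_eq with hc | rfl
  · exact hneg c hc hfc
  · exact h0.ne' hfc

lemma Polynomial.card_roots_filter_pos_eq_zero {p : ℝ[X]} (h : ∀ r, 0 < r → ¬ p.IsRoot r) :
    Multiset.card (p.roots.filter (fun x => 0 < x)) = 0 := by
  rw [Multiset.card_eq_zero, Multiset.filter_eq_nil]
  exact fun r hr hpos => h r hpos (isRoot_of_mem_roots hr)

theorem deg6_sign_sequence_impossibility_1_general
    (a₀ a₁ a₂ a₃ a₄ a₅ a₆ : ℝ)
    (h₀ : 0 < a₀) (h₁ : 0 < a₁) (h₃ : 0 < a₃)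
    (h₅ : 0 < a₅)
    (p : Polynomial ℝ)
    (hp : p = C a₀ + C a₁ * X + C a₂ * X ^ 2 + C a₃ * X ^ 3 + C a₄ * X ^ 4
      + C a₅ * X ^ 5 + C a₆ * X ^ 6)
    (hneg : ∀ x : ℝ, x < 0 → p.eval x ≠ 0) :
    Multiset.card (p.roots.filter (fun x => 0 < x)) ≠ 2 ∧
    Multiset.card (p.roots.filter (fun x => 0 < x)) ≠ 4 := by
  have hodd (r : ℝ) : p.eval (-r) = p.eval r - 2 * (a₁ * r + a₃ * r ^ 3 + a₅ * r ^ 5) := by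
    simp only [hp, eval_add, eval_mul, eval_pow, eval_C, eval_X]
    ring
  have hpos_at_zero : 0 < p.eval 0 := by simpa [hp] using h₀
  have hno_pos_root (r : ℝ) (hr : 0 < r) : ¬ p.IsRoot r := by
    intro hroot
    have hpos := pos_of_nonpos_of_forall_neg_ne_zero p.continuous hpos_at_zero hneg
      (neg_nonpos.2 hr.le)
    rw [hodd, hroot.eq_zero] at hpos
    have : 0 < a₁ * r + a₃ * r ^ 3 + a₅ * r ^ 5 := by positivity
    linarith
  rw [Polynomial.card_roots_filter_pos_eq_zero hno_pos_root]
  decide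

/-- Impossibility for degree 6: a polynomial with sign sequence `+,+,-,+,-,+,+`
(constant term first) and no negative roots cannot have exactly 2 or exactly 4
positive roots counted with multiplicity. -/
theorem deg6_sign_sequence_impossibility_1
    (a₀ a₁ a₂ a₃ a₄ a₅ a₆ : ℝ)
    (h₀ : 0 < a₀) (h₁ : 0 < a₁) (h₂ : a₂ < 0) (h₃ : 0 < a₃)
    (h₄ : a₄ < 0) (h₅ : 0 < a₅) (h₆ : 0 < a₆)
    (p : Polynomial ℝ)
    (hp : p = C a₀ + C a₁ * X + C a₂ * X ^ 2 + C a₃ * X ^ 3 + C a₄ * X ^ 4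
      + C a₅ * X ^ 5 + C a₆ * X ^ 6)
    (hneg : ∀ x : ℝ, x < 0 → p.eval x ≠ 0) :
    Multiset.card (p.roots.filter (fun x => 0 < x)) ≠ 2 ∧
    Multiset.card (p.roots.filter (fun x => 0 < x)) ≠ 4 :=
  deg6_sign_sequence_impossibility_1_general a₀ a₁ a₂ a₃ a₄ a₅ a₆ h₀ h₁ h₃ h₅ p hp hneg
end

section
/- Let p(x) = a₀ + a₁x + a₂x² + a₃x³ + a₄x⁴ + a₅x⁵ + a₆x⁶ be a real polynomial with a₀ > 0, a₁ > 0, a₂ > 0, a₃ > 0, a₄ < 0, a₅ > 0, a₆ > 0. If p has no negative real roots, then the number of positive real roots of p counted with multiplicity is not 2. -/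
/-!
If `t > 0` is a root, then `p(-t) = p(t) - 2 (a₁ t + a₃ t³ + a₅ t⁵) < 0`, while `p(x) → +∞` as
`x → -∞` because `p` has even degree and positive leading coefficient. So a positive root forces a
root in `(-∞, -t)`: under the hypotheses `p` has no positive roots at all.
-/

open Polynomial Filter

theorem Even.tendsto_pow_atBot_atTop {α : Type*} [Ring α] [LinearOrder α] [IsStrictOrderedRing α]
    {n : ℕ} (hn : Even n) (hn0 : n ≠ 0) : Tendsto (fun x : α => x ^ n) atBot atTop := by
  simpa only [Function.comp_def, hn.neg_pow] using
    (tendsto_pow_atTop (α := α) hn0).comp tendsto_neg_atBot_atTop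

theorem Polynomial.exists_isRoot_lt_of_eval_neg {p : ℝ[X]} (hdeg : Even p.natDegree)
    (hlc : 0 < p.leadingCoeff) {x : ℝ} (hx : p.eval x < 0) : ∃ y < x, p.IsRoot y := by
  have hdeg0 : p.natDegree ≠ 0 := by
    intro h
    rw [eq_C_of_natDegree_eq_zero h, eval_C] at hx
    rw [leadingCoeff, h] at hlc
    exact hx.not_gt hlc
  have hlim : Tendsto (fun y => p.eval y) atBot atTop :=
    p.isEquivalent_atBot_lead.symm.tendsto_atTop
      (Tendsto.const_mul_atTop hlc (hdeg.tendsto_pow_atBot_atTop hdeg0))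
  obtain ⟨z, hzx, hz⟩ := ((eventually_lt_atBot x).and (hlim.eventually_gt_atTop 0)).exists
  obtain ⟨y, hy, hyroot⟩ := intermediate_value_Ioo' hzx.le p.continuous.continuousOn
    (show (0 : ℝ) ∈ Set.Ioo _ _ from ⟨hx, hz⟩)
  exact ⟨y, hy.2, hyroot⟩

theorem deg6_sign_sequence_impossibility_2_general
    (a₀ a₁ a₂ a₃ a₄ a₅ a₆ : ℝ)
    (h₁ : 0 < a₁) (h₃ : 0 < a₃) (h₅ : 0 < a₅) (h₆ : 0 < a₆)
    (p : Polynomial ℝ)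
    (hp : p = C a₀ + C a₁ * X + C a₂ * X ^ 2 + C a₃ * X ^ 3 + C a₄ * X ^ 4
      + C a₅ * X ^ 5 + C a₆ * X ^ 6)
    (hneg : ∀ x : ℝ, x < 0 → p.eval x ≠ 0) :
    Multiset.card (p.roots.filter (fun x => 0 < x)) ≠ 2 := by
  intro hcard
  have heval (x : ℝ) :
      p.eval x = a₀ + a₁ * x + a₂ * x ^ 2 + a₃ * x ^ 3 + a₄ * x ^ 4 + a₅ * x ^ 5 + a₆ * x ^ 6 := by
    simp [hp]
  obtain ⟨t, ht⟩ := Multiset.card_pos_iff_exists_mem.mp (hcard ▸ two_pos)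
  obtain ⟨ht_root, ht_pos⟩ := Multiset.mem_filter.mp ht
  have hdeg : p.natDegree = 6 := by
    rw [hp]; compute_degree!; exact h₆.ne'
  have hlc : 0 < p.leadingCoeff := by
    rw [leadingCoeff, hdeg, hp]; simpa using h₆
  have hval : p.eval (-t) < 0 := by
    have hroot := (mem_roots'.mp ht_root).2
    have hodd : 0 < a₁ * t + a₃ * t ^ 3 + a₅ * t ^ 5 := by positivity
    rw [IsRoot.def, heval] at hroot
    rw [heval]
    linear_combination hroot + 2 * hodd
  obtain ⟨y, hy, hy_root⟩ := exists_isRoot_lt_of_eval_neg (by rw [hdeg]; decide) hlc hval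
  exact hneg y (by linarith) hy_root

/-- Impossibility for degree 6: a polynomial with sign sequence `+,+,+,+,-,+,+`
(constant term first) and no negative roots cannot have exactly 2 positive
roots counted with multiplicity. -/
theorem deg6_sign_sequence_impossibility_2
    (a₀ a₁ a₂ a₃ a₄ a₅ a₆ : ℝ)
    (h₀ : 0 < a₀) (h₁ : 0 < a₁) (h₂ : 0 < a₂) (h₃ : 0 < a₃)
    (h₄ : a₄ < 0) (h₅ : 0 < a₅) (h₆ : 0 < a₆)
    (p : Polynomial ℝ)
    (hp : p = C a₀ + C a₁ * X + C a₂ * X ^ 2 + C a₃ * X ^ 3 + C a₄ * X ^ 4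
      + C a₅ * X ^ 5 + C a₆ * X ^ 6)
    (hneg : ∀ x : ℝ, x < 0 → p.eval x ≠ 0) :
    Multiset.card (p.roots.filter (fun x => 0 < x)) ≠ 2 :=
  deg6_sign_sequence_impossibility_2_general a₀ a₁ a₂ a₃ a₄ a₅ a₆ h₁ h₃ h₅ h₆ p hp hneg
end

section
/- Let p(x) = a₀ + a₁x + a₂x² + a₃x³ + a₄x⁴ + a₅x⁵ + a₆x⁶ be a real polynomial with a₀ > 0, a₁ > 0, a₂ < 0, a₃ < 0, a₄ < 0, a₅ < 0, a₆ > 0. If p has no positive real roots, then the number of negative real roots of p counted with multiplicity is not 4. -/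
/-!
Since `p 0 = a₀ > 0` and `p` has no positive roots, all its roots are negative. If there are four
of them, `p = (X + r₁)(X + r₂)(X + r₃)(X + r₄) · q` with `rᵢ > 0` and `q = b₂X² + b₁X + b₀` a
quadratic without real roots, so `b₂ = a₆ > 0` and `b₁² < 4b₀b₂`. In terms of the elementary
symmetric functions `eₖ` of the `rᵢ`, `a₅ = b₁ + b₂e₁` and `a₂ = b₀e₂ + b₁e₃ + b₂e₄`. If both were
negative, then `-b₁ > b₂e₁` and `-b₁e₃ > b₀e₂`, hence `b₁² e₃ > b₀b₂ e₁e₂ ≥ 4b₀b₂ e₃`, using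
`e₁e₂ ≥ 4e₃`; this contradicts the negative discriminant.
-/

open Polynomial

namespace Multiset

theorem esymm_nonneg {R : Type*} [CommSemiring R] [PartialOrder R] [IsOrderedRing R]
    {s : Multiset R} (hs : ∀ x ∈ s, 0 ≤ x) (k : ℕ) : 0 ≤ s.esymm k := by
  refine sum_nonneg fun y hy => ?_
  obtain ⟨t, ht, rfl⟩ := mem_map.mp hy
  exact prod_nonneg fun x hx => hs x (mem_of_le (mem_powersetCard.mp ht).1 hx)

theorem four_mul_esymm_three_le_esymm_one_mul_esymm_two {s : Multiset ℝ} (hcard : card s = 4)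
    (hs : ∀ x ∈ s, 0 ≤ x) : 4 * s.esymm 3 ≤ s.esymm 1 * s.esymm 2 := by
  obtain ⟨a, b, c, d, rfl⟩ := card_eq_four.mp hcard
  simp only [insert_eq_cons, mem_cons, mem_singleton, forall_eq_or_imp, forall_eq] at hs
  obtain ⟨ha, hb, hc, hd⟩ := hs
  simp only [esymm, insert_eq_cons, powersetCard_cons, Nat.reduceAdd, card_cons, card_singleton,
    Nat.lt_add_one, powersetCard_eq_empty, Order.lt_two_iff, Std.le_refl, powersetCard_one,
    map_singleton, zero_add, powersetCard_zero_left, cons_zero, singleton_add,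
    map_cons, add_cons, prod_cons, prod_singleton, sum_cons, sum_singleton, cons_add]
  nlinarith [mul_nonneg ha (sq_nonneg (b - c)), mul_nonneg ha (sq_nonneg (b - d)),
    mul_nonneg ha (sq_nonneg (c - d)), mul_nonneg hb (sq_nonneg (a - c)),
    mul_nonneg hb (sq_nonneg (a - d)), mul_nonneg hb (sq_nonneg (c - d)),
    mul_nonneg hc (sq_nonneg (a - b)), mul_nonneg hc (sq_nonneg (a - d)),
    mul_nonneg hc (sq_nonneg (b - d)), mul_nonneg hd (sq_nonneg (a - b)),
    mul_nonneg hd (sq_nonneg (a - c)), mul_nonneg hd (sq_nonneg (b - c)),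
    mul_nonneg (mul_nonneg ha hb) hc, mul_nonneg (mul_nonneg ha hb) hd,
    mul_nonneg (mul_nonneg ha hc) hd, mul_nonneg (mul_nonneg hb hc) hd]

end Multiset

theorem nonneg_or_nonneg_of_discrim_neg {e₁ e₂ e₃ e₄ b₀ b₁ b₂ : ℝ} (he₂ : 0 ≤ e₂) (he₃ : 0 ≤ e₃)
    (he₄ : 0 ≤ e₄) (he : 4 * e₃ ≤ e₁ * e₂) (hb₂ : 0 < b₂) (hdisc : discrim b₂ b₁ b₀ < 0) :
    0 ≤ b₁ + e₁ * b₂ ∨ 0 ≤ e₂ * b₀ + e₃ * b₁ + e₄ * b₂ := by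
  rw [discrim] at hdisc
  by_contra! h
  obtain ⟨h₅, h₂⟩ := h
  have hb₀ : 0 < b₀ := by nlinarith [sq_nonneg b₁]
  have hb₁ : 0 < -b₁ := by nlinarith
  have h₂' : e₂ * b₀ < -b₁ * e₃ := by nlinarith
  have hlt : b₀ * b₂ * (e₁ * e₂) < b₀ * b₂ * (4 * e₃) :=
    calc b₀ * b₂ * (e₁ * e₂) = (e₁ * b₂) * (e₂ * b₀) := by ring
      _ ≤ -b₁ * (e₂ * b₀) := by gcongr; linarith
      _ < -b₁ * (-b₁ * e₃) := by gcongr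
      _ = b₁ ^ 2 * e₃ := by ring
      _ ≤ 4 * b₂ * b₀ * e₃ := by gcongr; linarith
      _ = b₀ * b₂ * (4 * e₃) := by ring
  exact hlt.not_ge (mul_le_mul_of_nonneg_left he (by positivity))

namespace Polynomial

theorem coeff_mul_add_two_of_natDegree_le_two {R : Type*} [CommSemiring R] (f : R[X]) {q : R[X]}
    (hq : q.natDegree ≤ 2) (n : ℕ) :
    (f * q).coeff (n + 2) =
      f.coeff (n + 2) * q.coeff 0 + f.coeff (n + 1) * q.coeff 1 + f.coeff n * q.coeff 2 := by
  conv_lhs => rw [q.as_sum_range' 3 (by omega)]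
  simp only [Finset.sum_range_succ, Finset.sum_range_zero, zero_add, mul_add, coeff_add,
    coeff_mul_monomial, show n + 2 = n + 1 + 1 from rfl]

theorem discrim_neg_of_roots_eq_zero {q : ℝ[X]} (hq : q.natDegree = 2) (hroots : q.roots = 0) :
    discrim (q.coeff 2) (q.coeff 1) (q.coeff 0) < 0 := by
  have hq₀ : q ≠ 0 := by rintro rfl; simp at hq
  have hq₂ : q.coeff 2 ≠ 0 := hq ▸ leadingCoeff_ne_zero.mpr hq₀
  by_contra! hd
  obtain ⟨x, hx⟩ := exists_quadratic_eq_zero hq₂ ⟨_, (Real.mul_self_sqrt hd).symm⟩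
  have hroot : q.IsRoot x := by
    rw [IsRoot, eval_eq_sum_range, hq]
    simp only [Finset.sum_range_succ, Finset.sum_range_zero]
    linear_combination hx
  simpa [hroots] using (mem_roots hq₀).mpr hroot

theorem coeff_five_nonneg_or_coeff_two_nonneg {r : Multiset ℝ} (hcard : Multiset.card r = 4)
    (hr : ∀ x ∈ r, 0 ≤ x) {q : ℝ[X]} (hq : q.natDegree ≤ 2) (hq₂ : 0 < q.coeff 2)
    (hdisc : discrim (q.coeff 2) (q.coeff 1) (q.coeff 0) < 0) :
    0 ≤ ((r.map fun t => X + C t).prod * q).coeff 5 ∨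
      0 ≤ ((r.map fun t => X + C t).prod * q).coeff 2 := by
  set f := (r.map fun t => X + C t).prod
  have hf : ∀ k ≤ 4, f.coeff k = r.esymm (4 - k) := fun k hk =>
    hcard ▸ r.prod_X_add_C_coeff (hcard ▸ hk)
  have hf₅ : f.coeff 5 = 0 := by
    refine coeff_eq_zero_of_natDegree_lt <| (natDegree_multiset_prod_le _).trans_lt ?_
    simp [Multiset.map_map, hcard]
  have he₀ : r.esymm 0 = 1 := by simp [Multiset.esymm]
  rw [coeff_mul_add_two_of_natDegree_le_two f hq 3, coeff_mul_add_two_of_natDegree_le_two f hq 0,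
    hf₅, hf 4 le_rfl]
  simp only [hf 3 (by norm_num), hf 2 (by norm_num), hf 1 (by norm_num), hf 0 (by norm_num),
    Nat.sub_self, he₀, zero_mul, zero_add, one_mul]
  exact nonneg_or_nonneg_of_discrim_neg (r.esymm_nonneg hr 2) (r.esymm_nonneg hr 3)
    (r.esymm_nonneg hr 4) (r.four_mul_esymm_three_le_esymm_one_mul_esymm_two hcard hr) hq₂ hdisc

end Polynomial

theorem deg6_sign_sequence_impossibility_3_general
    (a₀ a₁ a₂ a₃ a₄ a₅ a₆ : ℝ)
    (h₀ : 0 < a₀) (h₂ : a₂ < 0)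
    (h₅ : a₅ < 0) (h₆ : 0 < a₆)
    (p : Polynomial ℝ)
    (hp : p = C a₀ + C a₁ * X + C a₂ * X ^ 2 + C a₃ * X ^ 3 + C a₄ * X ^ 4
      + C a₅ * X ^ 5 + C a₆ * X ^ 6)
    (hpos : ∀ x : ℝ, 0 < x → p.eval x ≠ 0) :
    Multiset.card (p.roots.filter (fun x => x < 0)) ≠ 4 := by
  have hdeg : p.natDegree = 6 := by rw [hp]; compute_degree!; exact h₆.ne'
  have hroots_neg : ∀ x ∈ p.roots, x < 0 := by
    intro x hx
    have hroot := (mem_roots'.mp hx).2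
    contrapose! hroot
    rcases hroot.eq_or_lt with rfl | hx
    · simp [hp, h₀.ne']
    · exact hpos x hx
  rw [Multiset.filter_eq_self.mpr hroots_neg]
  intro hcard
  obtain ⟨q, hpq, hdegq, hq⟩ := p.exists_prod_multiset_X_sub_C_mul
  have hq₂ : q.natDegree = 2 := by omega
  have hlead : q.coeff 2 = a₆ := by
    have := congrArg leadingCoeff hpq
    rw [leadingCoeff_mul, (monic_multisetProd_X_sub_C _).leadingCoeff, one_mul, leadingCoeff,
      leadingCoeff, hq₂, hdeg] at this
    simp [this, hp]
  have hneg : (p.roots.map fun a => X - C a) = (p.roots.map Neg.neg).map fun t => X + C t := by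
    simp [Multiset.map_map, sub_eq_add_neg]
  have hr : ∀ t ∈ p.roots.map Neg.neg, 0 ≤ t := fun t ht => by
    obtain ⟨x, hx, rfl⟩ := Multiset.mem_map.mp ht
    exact neg_nonneg.mpr (hroots_neg x hx).le
  have key := coeff_five_nonneg_or_coeff_two_nonneg (by simpa using hcard) hr hq₂.le (hlead ▸ h₆)
    (discrim_neg_of_roots_eq_zero hq₂ hq)
  obtain ⟨hc₅, hc₂⟩ : p.coeff 5 = a₅ ∧ p.coeff 2 = a₂ := by simp [hp]
  rw [← hneg, hpq, hc₅, hc₂] at key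
  exact key.elim h₅.not_ge h₂.not_ge

/-- Impossibility for degree 6: a polynomial with sign sequence `+,+,-,-,-,-,+`
(constant term first) and no positive roots cannot have exactly 4 negative
roots counted with multiplicity, i.e. `(P, N) = (0, 4)` is impossible. -/
theorem deg6_sign_sequence_impossibility_3
    (a₀ a₁ a₂ a₃ a₄ a₅ a₆ : ℝ)
    (h₀ : 0 < a₀) (h₁ : 0 < a₁) (h₂ : a₂ < 0) (h₃ : a₃ < 0)
    (h₄ : a₄ < 0) (h₅ : a₅ < 0) (h₆ : 0 < a₆)
    (p : Polynomial ℝ)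
    (hp : p = C a₀ + C a₁ * X + C a₂ * X ^ 2 + C a₃ * X ^ 3 + C a₄ * X ^ 4
      + C a₅ * X ^ 5 + C a₆ * X ^ 6)
    (hpos : ∀ x : ℝ, 0 < x → p.eval x ≠ 0) :
    Multiset.card (p.roots.filter (fun x => x < 0)) ≠ 4 :=
  deg6_sign_sequence_impossibility_3_general a₀ a₁ a₂ a₃ a₄ a₅ a₆ h₀ h₂ h₅ h₆ p hp hpos
end

section
/- Let x₁, x₂, x₃, x₄ be positive real numbers and set α = x₁+x₂+x₃+x₄, β = x₁x₂+x₁x₃+x₂x₃+x₁x₄+x₂x₄+x₃x₄, γ = x₁x₂x₃+x₁x₂x₄+x₁x₃x₄+x₂x₃x₄, δ = x₁x₂x₃x₄. Then there do not exist real numbers b, c with 4c > b² > 0 such that both c·β − b·γ + δ < 0 and α − b < 0. -/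
/-!
Since `β > 0`, the expression `c β - b γ + δ` is increasing in `c`, so with `4c > b²` it exceeds
`b (b β - 4 γ) / 4 + δ`. For `b > α` this is nonnegative as soon as `α β ≥ 4 γ`, which follows
from Maclaurin's inequality `α β ≥ 6 γ` for nonnegative reals.
-/

lemma mul_sub_mul_add_pos_of_sq_lt_four_mul {α β γ δ b c : ℝ} (hα : 0 ≤ α) (hβ : 0 < β)
    (hδ : 0 ≤ δ) (hγ : 4 * γ ≤ α * β) (hb : α < b) (hc : b ^ 2 < 4 * c) :
    0 < c * β - b * γ + δ := by
  have hcβ : b ^ 2 * β < 4 * c * β := mul_lt_mul_of_pos_right hc hβ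
  have hbγ : 4 * b * γ ≤ b ^ 2 * β := by
    have hαb : α * β ≤ b * β := mul_le_mul_of_nonneg_right hb.le hβ.le
    nlinarith
  linarith

lemma six_mul_esymm_three_le_esymm_one_mul_esymm_two {x₁ x₂ x₃ x₄ : ℝ}
    (h₁ : 0 ≤ x₁) (h₂ : 0 ≤ x₂) (h₃ : 0 ≤ x₃) (h₄ : 0 ≤ x₄) :
    6 * (x₁ * x₂ * x₃ + x₁ * x₂ * x₄ + x₁ * x₃ * x₄ + x₂ * x₃ * x₄) ≤
      (x₁ + x₂ + x₃ + x₄) *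
        (x₁ * x₂ + x₁ * x₃ + x₂ * x₃ + x₁ * x₄ + x₂ * x₄ + x₃ * x₄) := by
  -- the difference is `½ ∑ₖ xₖ ∑ (xᵢ - xⱼ)²`, the inner sum over pairs `{i, j}` avoiding `k`
  nlinarith [mul_nonneg h₁ (sq_nonneg (x₂ - x₃)), mul_nonneg h₁ (sq_nonneg (x₂ - x₄)),
    mul_nonneg h₁ (sq_nonneg (x₃ - x₄)), mul_nonneg h₂ (sq_nonneg (x₁ - x₃)),
    mul_nonneg h₂ (sq_nonneg (x₁ - x₄)), mul_nonneg h₂ (sq_nonneg (x₃ - x₄)),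
    mul_nonneg h₃ (sq_nonneg (x₁ - x₂)), mul_nonneg h₃ (sq_nonneg (x₁ - x₄)),
    mul_nonneg h₃ (sq_nonneg (x₂ - x₄)), mul_nonneg h₄ (sq_nonneg (x₁ - x₂)),
    mul_nonneg h₄ (sq_nonneg (x₁ - x₃)), mul_nonneg h₄ (sq_nonneg (x₂ - x₃))]

/-- The core algebraic fact behind the impossibility of `(P, N) = (0, 4)` for
degree 6 sign sequence `+,+,-,-,-,-,+`: with `α, β, γ, δ` the elementary
symmetric polynomials of positive reals `x₁, x₂, x₃, x₄`, there are no reals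
`b, c` with `4c > b² > 0`, `cβ - bγ + δ < 0` and `α - b < 0`. -/
theorem deg6_core_inequality
    (x₁ x₂ x₃ x₄ : ℝ)
    (h₁ : 0 < x₁) (h₂ : 0 < x₂) (h₃ : 0 < x₃) (h₄ : 0 < x₄)
    (α β γ δ : ℝ)
    (hα : α = x₁ + x₂ + x₃ + x₄)
    (hβ : β = x₁ * x₂ + x₁ * x₃ + x₂ * x₃ + x₁ * x₄ + x₂ * x₄ + x₃ * x₄)
    (hγ : γ = x₁ * x₂ * x₃ + x₁ * x₂ * x₄ + x₁ * x₃ * x₄ + x₂ * x₃ * x₄)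
    (hδ : δ = x₁ * x₂ * x₃ * x₄) :
    ¬ ∃ b c : ℝ, b ^ 2 < 4 * c ∧ 0 < b ^ 2 ∧
      c * β - b * γ + δ < 0 ∧ α - b < 0 := by
  rintro ⟨b, c, hc, -, hneg, hb⟩
  have hmaclaurin : 6 * γ ≤ α * β := by
    subst hα hβ hγ
    exact six_mul_esymm_three_le_esymm_one_mul_esymm_two h₁.le h₂.le h₃.le h₄.le
  have hγ_nonneg : 0 ≤ γ := by rw [hγ]; positivity
  have hpos : 0 < c * β - b * γ + δ :=
    mul_sub_mul_add_pos_of_sq_lt_four_mul (α := α) (by rw [hα]; positivity)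
      (by rw [hβ]; positivity) (by rw [hδ]; positivity) (by linarith) (by linarith) hc
  linarith
end

section
/- Let x₁, x₂, x₃, x₄ be positive real numbers and let α, β, γ, δ denote their elementary symmetric polynomials of degrees 1, 2, 3, 4 respectively. Then the following three inequalities hold: γ² − βδ > 0; αβ − 2γ > 0; and α²β − 4αγ + 4δ > 0. -/
/-!
Writing `E(t) = ∏ (t + xᵢ)`, the identity `E(t) E(-t) = ∏ (t² - xᵢ²)` expresses the elementary
symmetric polynomials of the squares `xᵢ²` through `α, β, γ, δ`:
`e₁(x²) = α² - 2β`, `e₂(x²) = β² - 2αγ + 2δ`, `e₃(x²) = γ² - 2βδ`. All three are positive, and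
each target is a positive combination of these, of `α, β, γ, δ`, and of `αβ - 3γ = ∑_{i ≠ j} xᵢ² xⱼ`:
`γ² - βδ = e₃(x²) + βδ`, `αβ - 2γ = (αβ - 3γ) + γ`, `α²β - 4αγ + 4δ = e₁(x²) β + 2 e₂(x²)`.
-/

section
variable {R : Type*} [CommRing R] (a b c d : R)

theorem esymm_one_sq_four :
    (a + b + c + d) ^ 2 - 2 * (a * b + a * c + b * c + a * d + b * d + c * d) =
      a ^ 2 + b ^ 2 + c ^ 2 + d ^ 2 := by
  ring

theorem esymm_two_sq_four :
    (a * b + a * c + b * c + a * d + b * d + c * d) ^ 2 -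
        2 * (a + b + c + d) * (a * b * c + a * b * d + a * c * d + b * c * d) +
        2 * (a * b * c * d) =
      a ^ 2 * b ^ 2 + a ^ 2 * c ^ 2 + b ^ 2 * c ^ 2 + a ^ 2 * d ^ 2 + b ^ 2 * d ^ 2 +
        c ^ 2 * d ^ 2 := by
  ring

theorem esymm_three_sq_four :
    (a * b * c + a * b * d + a * c * d + b * c * d) ^ 2 -
        2 * (a * b + a * c + b * c + a * d + b * d + c * d) * (a * b * c * d) =
      a ^ 2 * b ^ 2 * c ^ 2 + a ^ 2 * b ^ 2 * d ^ 2 + a ^ 2 * c ^ 2 * d ^ 2 +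
        b ^ 2 * c ^ 2 * d ^ 2 := by
  ring

theorem esymm_one_mul_esymm_two_sub_three_mul_esymm_three_four :
    (a + b + c + d) * (a * b + a * c + b * c + a * d + b * d + c * d) -
        3 * (a * b * c + a * b * d + a * c * d + b * c * d) =
      a ^ 2 * (b + c + d) + b ^ 2 * (a + c + d) + c ^ 2 * (a + b + d) + d ^ 2 * (a + b + c) := by
  ring

end

/-- Key positivity facts for elementary symmetric polynomials of four positive
reals, used in the proof that `(P, N) = (0, 4)` is impossible for degree 6
polynomials with sign sequence `+,+,-,-,-,-,+`. -/
theorem elementary_symmetric_inequalities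
    (x₁ x₂ x₃ x₄ : ℝ)
    (h₁ : 0 < x₁) (h₂ : 0 < x₂) (h₃ : 0 < x₃) (h₄ : 0 < x₄)
    (α β γ δ : ℝ)
    (hα : α = x₁ + x₂ + x₃ + x₄)
    (hβ : β = x₁ * x₂ + x₁ * x₃ + x₂ * x₃ + x₁ * x₄ + x₂ * x₄ + x₃ * x₄)
    (hγ : γ = x₁ * x₂ * x₃ + x₁ * x₂ * x₄ + x₁ * x₃ * x₄ + x₂ * x₃ * x₄)
    (hδ : δ = x₁ * x₂ * x₃ * x₄) :
    0 < γ ^ 2 - β * δ ∧ 0 < α * β - 2 * γ ∧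
      0 < α ^ 2 * β - 4 * α * γ + 4 * δ := by
  have hβ_pos : 0 < β := by rw [hβ]; positivity
  have hγ_pos : 0 < γ := by rw [hγ]; positivity
  have hδ_pos : 0 < δ := by rw [hδ]; positivity
  have hsq₁ : 0 < α ^ 2 - 2 * β := by
    rw [hα, hβ, esymm_one_sq_four]; positivity
  have hsq₂ : 0 < β ^ 2 - 2 * α * γ + 2 * δ := by
    rw [hα, hβ, hγ, hδ, esymm_two_sq_four]; positivity
  have hsq₃ : 0 < γ ^ 2 - 2 * β * δ := by
    rw [hβ, hγ, hδ, esymm_three_sq_four]; positivity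
  have hmix : 0 < α * β - 3 * γ := by
    rw [hα, hβ, hγ, esymm_one_mul_esymm_two_sub_three_mul_esymm_three_four]; positivity
  refine ⟨?_, ?_, ?_⟩
  · linarith [mul_pos hβ_pos hδ_pos]
  · linarith
  · linarith [mul_pos hsq₁ hβ_pos]
end

section
/- Let 0 < x₁ < x₂ < … < xₘ be positive real numbers and α₁ < α₂ < … < αₘ be real numbers. Then the m×m generalized Vandermonde matrix whose (i,j) entry is xᵢ^{αⱼ} (real power) has nonzero determinant. -/
/-! By induction on `m`, a combination `∑ⱼ cⱼ t^{αⱼ}` vanishing at `m` points of `(0, ∞)` is zero.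
Dividing by `t^{α₀}` does not move the zeros and turns the leading exponent into `0`; by Rolle's
theorem the derivative, a combination of the `m - 1` powers `t^{αⱼ - α₀ - 1}` (`j ≥ 1`), vanishes at
`m - 1` points interlacing the original ones, so those coefficients vanish, and then so does `c₀`. -/

open Finset Matrix

theorem exists_strictMono_hasDerivAt_eq_zero {n : ℕ} {s : Set ℝ} (hs : s.OrdConnected)
    {f f' : ℝ → ℝ} (hf : ∀ t ∈ s, HasDerivAt f (f' t) t) {x : Fin (n + 1) → ℝ}
    (hx : StrictMono x) (hxs : ∀ i, x i ∈ s) (hzero : ∀ i, f (x i) = 0) :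
    ∃ z : Fin n → ℝ, StrictMono z ∧ (∀ i, z i ∈ s) ∧ ∀ i, f' (z i) = 0 := by
  have hIcc : ∀ i : Fin n, Set.Icc (x i.castSucc) (x i.succ) ⊆ s := fun i =>
    hs.out (hxs _) (hxs _)
  have hrolle : ∀ i : Fin n,
      ∃ z ∈ Set.Ioo (x i.castSucc) (x i.succ), f' z = 0 := fun i =>
    exists_hasDerivAt_eq_zero (hx i.castSucc_lt_succ)
      (fun t ht => (hf t (hIcc i ht)).continuousAt.continuousWithinAt)
      (by rw [hzero, hzero]) (fun t ht => hf t (hIcc i (Set.Ioo_subset_Icc_self ht)))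
  choose z hz hz' using hrolle
  refine ⟨z, fun i j hij => ?_, fun i => hIcc i (Set.Ioo_subset_Icc_self (hz i)), hz'⟩
  calc z i < x i.succ := (hz i).2
    _ ≤ x j.castSucc := hx.monotone (Fin.succ_le_castSucc_iff.mpr hij)
    _ < z j := (hz j).1

noncomputable def rpowComb {m : ℕ} (c α : Fin m → ℝ) (t : ℝ) : ℝ :=
  ∑ j, c j * t ^ α j

theorem rpowComb_mul_rpow {m : ℕ} (c α : Fin m → ℝ) {t : ℝ} (ht : 0 < t) (β : ℝ) :
    rpowComb c α t * t ^ β = rpowComb c (fun j => α j + β) t := by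
  simp only [rpowComb, sum_mul, mul_assoc, Real.rpow_add ht]

theorem hasDerivAt_rpowComb {m : ℕ} (c α : Fin m → ℝ) {t : ℝ} (ht : 0 < t) :
    HasDerivAt (rpowComb c α) (rpowComb (fun j => c j * α j) (fun j => α j - 1) t) t := by
  unfold rpowComb
  simpa only [mul_assoc] using HasDerivAt.fun_sum (u := univ) fun j _ =>
    (Real.hasDerivAt_rpow_const (p := α j) (Or.inl ht.ne')).const_mul (c j)

theorem rpowComb_succ {n : ℕ} (c α : Fin (n + 1) → ℝ) (t : ℝ) :
    rpowComb c α t = c 0 * t ^ α 0 + rpowComb (Fin.tail c) (Fin.tail α) t :=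
  Fin.sum_univ_succ _

theorem rpowComb_eq_zero_of_forall {m : ℕ} {c α x : Fin m → ℝ} (hα : StrictMono α)
    (hx : StrictMono x) (hxpos : ∀ i, 0 < x i) (hzero : ∀ i, rpowComb c α (x i) = 0) :
    c = 0 := by
  induction m with
  | zero => exact Subsingleton.elim _ _
  | succ n ih =>
    set β : Fin (n + 1) → ℝ := fun j => α j - α 0
    have hβzero : ∀ i, rpowComb c β (x i) = 0 := fun i => by
      have h := rpowComb_mul_rpow c α (hxpos i) (-α 0)
      rw [hzero i, zero_mul] at h
      simpa [β, sub_eq_add_neg] using h.symm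
    obtain ⟨z, hz, hzpos, hz'⟩ := exists_strictMono_hasDerivAt_eq_zero Set.ordConnected_Ioi
      (fun t ht => hasDerivAt_rpowComb c β ht) hx hxpos hβzero
    have hβtail : StrictMono (Fin.tail fun j => β j - 1) := fun i j hij => by
      simpa [Fin.tail, β] using hα (Fin.succ_lt_succ_iff.mpr hij)
    have htail : Fin.tail (fun j => c j * β j) = 0 :=
      ih hβtail hz hzpos fun i => by simpa [rpowComb_succ, β] using hz' i
    have hcsucc : ∀ j : Fin n, c j.succ = 0 := fun j => by
      have hj := congrFun htail j
      simpa [Fin.tail, β, sub_eq_zero, (hα (Fin.succ_pos j)).ne'] using hj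
    have hc0 : c 0 = 0 := by
      have h0 := hzero 0
      rw [rpowComb_succ] at h0
      simpa [rpowComb, Fin.tail, hcsucc, (Real.rpow_pos_of_pos (hxpos 0) _).ne'] using h0
    funext j
    exact Fin.cases hc0 hcsucc j

theorem of_rpow_mulVec {m n : ℕ} (x : Fin m → ℝ) (α c : Fin n → ℝ) :
    Matrix.of (fun i j => x i ^ α j) *ᵥ c = fun i => rpowComb c α (x i) := by
  ext i
  simp [mulVec, dotProduct, rpowComb, mul_comm]

/-- Generalized Vandermonde determinant: for `0 < x₁ < … < xₘ` and real
exponents `α₁ < … < αₘ`, the matrix with entries `xᵢ ^ αⱼ` (real powers) has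
nonzero determinant. -/
theorem generalized_vandermonde_det_ne_zero
    (m : ℕ) (x : Fin m → ℝ) (hx : StrictMono x) (hxpos : ∀ i, 0 < x i)
    (α : Fin m → ℝ) (hα : StrictMono α) :
    Matrix.det (Matrix.of fun i j : Fin m => (x i) ^ (α j)) ≠ 0 := by
  intro hdet
  obtain ⟨c, hc, hker⟩ := Matrix.exists_mulVec_eq_zero_iff.mpr hdet
  rw [of_rpow_mulVec] at hker
  exact hc (rpowComb_eq_zero_of_forall hα hx hxpos (congrFun hker))
end

section
/- Let p(x) = 744 − 1286x + 559x² + 25x³ − 44x⁴ + x⁵ + x⁶. Then p(x) = (31 + 11x + x²)(1−x)(2−x)(3−x)(4−x), the multiset of positive real roots of p counted with multiplicity is {1, 2, 3, 4}, and p has no negative real roots. In particular, there exists a degree 6 real polynomial with coefficient sign sequence +,−,+,+,−,+,+ (constant term first) having exactly 4 positive roots and no negative roots. -/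
open Polynomial

/-! The sextic is the product of the four linear factors `X - a`, `a = 1, 2, 3, 4`, and the
quadratic `X² + 11X + 31`, whose discriminant `121 - 124` is negative; so its roots are exactly
`1, 2, 3, 4`. -/

theorem roots_X_sq_add_C_mul_X_add_C_of_discrim_neg {K : Type*} [Field K] [LinearOrder K]
    [IsStrictOrderedRing K] {b c : K} (h : discrim 1 b c < 0) :
    (X ^ 2 + C b * X + C c).roots = 0 := by
  refine Multiset.eq_zero_of_forall_notMem fun x hx => ?_
  have hx := isRoot_of_mem_roots hx
  refine quadratic_ne_zero_of_discrim_ne_sq (fun s => (h.trans_le (sq_nonneg s)).ne) x ?_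
  simpa [sq] using hx

/-- The degree-6 polynomial `744 - 1286x + 559x² + 25x³ - 44x⁴ + x⁵ + x⁶`, with
sign sequence `+,-,+,+,-,+,+`, factors as `(31 + 11x + x²)(1-x)(2-x)(3-x)(4-x)`,
has positive-root multiset `{1, 2, 3, 4}` and no negative roots:
`(P, N) = (4, 0)`. -/
theorem deg6_example_four_pos_no_neg
    (p : Polynomial ℝ)
    (hp : p = C 744 - C 1286 * X + C 559 * X ^ 2 + C 25 * X ^ 3 - C 44 * X ^ 4
      + X ^ 5 + X ^ 6) :
    p = (C 31 + C 11 * X + X ^ 2) * (C 1 - X) * (C 2 - X) * (C 3 - X)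
      * (C 4 - X) ∧
    p.roots.filter (fun x => 0 < x) = {1, 2, 3, 4} ∧
    p.roots.filter (fun x => x < 0) = 0 := by
  have hfactor : p = (X ^ 2 + C 11 * X + C 31) *
      (({1, 2, 3, 4} : Multiset ℝ).map fun a => X - C a).prod := by
    rw [hp]
    simp only [Multiset.insert_eq_cons, Multiset.map_cons, Multiset.map_singleton,
      Multiset.prod_cons, Multiset.prod_singleton, map_ofNat, C_1]
    ring
  have hmonic : (X ^ 2 + C (11 : ℝ) * X + C 31).Monic := by monicity!
  have hroots : p.roots = {1, 2, 3, 4} := by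
    rw [hfactor, roots_mul ((hmonic.mul (monic_multiset_prod_of_monic _ _
        fun a _ => monic_X_sub_C a)).ne_zero),
      roots_X_sq_add_C_mul_X_add_C_of_discrim_neg (by norm_num [discrim]),
      roots_multiset_prod_X_sub_C, zero_add]
  refine ⟨by rw [hp]; simp only [map_ofNat, C_1]; ring, ?_, ?_⟩ <;> rw [hroots] <;>
    simp [Multiset.filter_singleton]
end
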